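/- arXiv:1601.02422 — 14 statements merged into one kernel-verified Lean document; each statement's English description precedes it below -/
import Mathlib

section
/- Let P be an integral monoid. Then a P-module (a set M with a P-action) is flat (i.e., a filtered direct limit of free P-modules) if and only if M is torsion-free (p+m = p'+m implies p = p') and comparable (p₁+m₁ = p₂+m₂ implies there exist m ∈ M and ρ₁,ρ₂ ∈ P with ρ₁+m = m₁ and ρ₂+m = m₂). -/
section MonMod

variable (P : Type) [CommMonoid P] (M : Type) [MulAction P M]

/-- `S ⊆ M` is a basis of the `P`-module `M`: the action map `P × S → M` is bijective. -/
def IsBasisSet (S : Set M) : Prop :=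
  Function.Bijective fun x : P × S => x.1 • (x.2 : M)

/-- `M` is a free `P`-module: it admits a basis. -/
def IsFreeMod : Prop := ∃ S : Set M, IsBasisSet P M S

/-- `M` is a torsion-free `P`-module. -/
def IsTorsionFreeMod : Prop := ∀ (p p' : P) (m : M), p • m = p' • m → p = p'

/-- `M` is a comparable `P`-module. -/
def IsComparableMod : Prop :=
  ∀ (p₁ p₂ : P) (m₁ m₂ : M), p₁ • m₁ = p₂ • m₂ →
    ∃ (m : M) (ρ₁ ρ₂ : P), ρ₁ • m = m₁ ∧ ρ₂ • m = m₂

/-- `M` is a flat `P`-module: it is a filtered direct limit of free `P`-modules.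
This is spelled out explicitly: there is a nonempty directed (filtered) index
preorder `(ι, r)`, a functorial system `F` of `P`-modules with free members and
equivariant transition maps `t`, together with equivariant maps `g i : F i → M`
exhibiting `M` as the direct limit of the system. -/
def IsFlatMod : Prop :=
  ∃ (ι : Type) (r : ι → ι → Prop) (F : ι → Type) (act : ∀ i, P → F i → F i)
    (t : ∀ i j, r i j → F i → F j) (g : ∀ i, F i → M),
    Nonempty ι ∧
    (∀ i, r i i) ∧
    (∀ i j k, r i j → r j k → r i k) ∧
    (∀ i j, ∃ k, r i k ∧ r j k) ∧
    -- each `F i` is a `P`-module: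
    (∀ i (x : F i), act i 1 x = x) ∧
    (∀ i (p q : P) (x : F i), act i (p * q) x = act i p (act i q x)) ∧
    -- each `F i` is free:
    (∀ i, ∃ S : Set (F i), Function.Bijective fun x : P × S => act i x.1 (x.2 : F i)) ∧
    -- transition maps are equivariant and functorial:
    (∀ i j (hij : r i j) (p : P) (x : F i), t i j hij (act i p x) = act j p (t i j hij x)) ∧
    (∀ i (hii : r i i) (x : F i), t i i hii x = x) ∧
    (∀ i j k (hij : r i j) (hjk : r j k) (hik : r i k) (x : F i),
       t j k hjk (t i j hij x) = t i k hik x) ∧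
    -- the maps to `M` are equivariant and compatible:
    (∀ i (p : P) (x : F i), g i (act i p x) = p • g i x) ∧
    (∀ i j (hij : r i j) (x : F i), g j (t i j hij x) = g i x) ∧
    -- `M` is the direct limit of the system:
    (∀ m : M, ∃ i, ∃ x : F i, g i x = m) ∧
    (∀ i j (x : F i) (y : F j), g i x = g j y →
       ∃ k, ∃ (hik : r i k) (hjk : r j k), t i k hik x = t j k hjk y)

end MonMod

/-!
A relation `p₁ • m₁ = p₂ • m₂` in a direct limit already holds at some stage, so torsion-freeness
and comparability pass from free modules, where they hold over an integral monoid, to flat ones.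

Conversely, comparability makes "being multiples of a common element" an equivalence relation on
`M`; let `C` be its set of classes. Every choice `σ` of a representative in each class gives a map
`C × P → M`, `(c, p) ↦ p • σ c`, from a free module. Choices are ordered by divisibility of their
representatives; comparability makes this order directed, torsion-freeness makes the quotients
of representatives unique, hence the transition maps functorial, and `M` is the direct limit.
-/

variable {P : Type} [CommMonoid P] {M : Type} [MulAction P M]

theorem IsFreeMod.isTorsionFreeMod [IsRightCancelMul P] (h : IsFreeMod P M) :
    IsTorsionFreeMod P M := by
  obtain ⟨S, hinj, hsurj⟩ := h
  intro p p' m hm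
  obtain ⟨⟨q, s⟩, rfl⟩ := hsurj m
  have : ((p * q, s) : P × S) = (p' * q, s) := hinj (by simpa only [mul_smul] using hm)
  exact mul_right_cancel (congrArg Prod.fst this)

theorem IsFreeMod.isComparableMod (h : IsFreeMod P M) : IsComparableMod P M := by
  obtain ⟨S, hinj, hsurj⟩ := h
  intro p₁ p₂ m₁ m₂ hm
  obtain ⟨⟨q₁, s₁⟩, rfl⟩ := hsurj m₁
  obtain ⟨⟨q₂, s₂⟩, rfl⟩ := hsurj m₂
  have : ((p₁ * q₁, s₁) : P × S) = (p₂ * q₂, s₂) := hinj (by simpa only [mul_smul] using hm)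
  obtain rfl : s₁ = s₂ := congrArg Prod.snd this
  exact ⟨s₁, q₁, q₂, rfl, rfl⟩

theorem IsFlatMod.isTorsionFreeMod [IsRightCancelMul P] (h : IsFlatMod P M) :
    IsTorsionFreeMod P M := by
  obtain ⟨ι, r, F, act, t, g, -, -, -, -, hone, hmul, hfree, ht, -, -, hg, -, hsurj, hinj⟩ := h
  let (i : ι) : MulAction P (F i) := { smul := act i, one_smul := hone i, mul_smul := hmul i }
  intro p p' m hm
  obtain ⟨i, x, rfl⟩ := hsurj m
  obtain ⟨k, hik, _, hk⟩ := hinj i i (act i p x) (act i p' x) (by rw [hg, hg, hm])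
  rw [ht, ht] at hk
  exact IsFreeMod.isTorsionFreeMod (hfree k) p p' _ hk

theorem IsFlatMod.isComparableMod (h : IsFlatMod P M) : IsComparableMod P M := by
  obtain ⟨ι, r, F, act, t, g, -, -, -, -, hone, hmul, hfree, ht, -, -, hg, hgt, hsurj, hinj⟩ := h
  let (i : ι) : MulAction P (F i) := { smul := act i, one_smul := hone i, mul_smul := hmul i }
  intro p₁ p₂ m₁ m₂ hm
  obtain ⟨i, x, rfl⟩ := hsurj m₁
  obtain ⟨j, y, rfl⟩ := hsurj m₂
  obtain ⟨k, hik, hjk, hk⟩ := hinj i j (act i p₁ x) (act j p₂ y) (by rw [hg, hg, hm])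
  rw [ht, ht] at hk
  obtain ⟨z, ρ₁, ρ₂, hz₁, hz₂⟩ := IsFreeMod.isComparableMod (hfree k) p₁ p₂ _ _ hk
  refine ⟨g k z, ρ₁, ρ₂, ?_, ?_⟩
  · rw [← hgt i k hik x, ← hz₁]
    exact (hg k ρ₁ z).symm
  · rw [← hgt j k hjk y, ← hz₂]
    exact (hg k ρ₂ z).symm

variable (P) in
def HaveCommonBase (m m' : M) : Prop := ∃ (n : M) (ρ ρ' : P), ρ • n = m ∧ ρ' • n = m'

theorem IsComparableMod.equivalence_haveCommonBase (hC : IsComparableMod P M) :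
    Equivalence (HaveCommonBase P (M := M)) where
  refl m := ⟨m, 1, 1, one_smul _ _, one_smul _ _⟩
  symm := fun ⟨n, ρ, ρ', h, h'⟩ => ⟨n, ρ', ρ, h', h⟩
  trans := by
    rintro _ _ _ ⟨n, ρ, ρ', rfl, h⟩ ⟨n', σ, σ', h', rfl⟩
    obtain ⟨k, τ, τ', rfl, rfl⟩ := hC ρ' σ n n' (h.trans h'.symm)
    exact ⟨k, ρ * τ, σ' * τ', mul_smul .., mul_smul ..⟩

def IsComparableMod.setoid (hC : IsComparableMod P M) : Setoid M :=
  ⟨HaveCommonBase P, hC.equivalence_haveCommonBase⟩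

theorem IsComparableMod.mk_smul (hC : IsComparableMod P M) (q : P) (m : M) :
    Quotient.mk hC.setoid (q • m) = Quotient.mk hC.setoid m :=
  Quotient.sound ⟨m, q, 1, rfl, one_smul _ _⟩

theorem IsTorsionFreeMod.choose_eq (hTF : IsTorsionFreeMod P M) {n m : M}
    (h : ∃ ρ : P, ρ • n = m) {ρ : P} (hρ : ρ • n = m) : h.choose = ρ :=
  hTF _ _ n (h.choose_spec.trans hρ.symm)

theorem bijective_prod_mul_of_snd_eq_one (C : Type) :
    Function.Bijective fun x : P × {y : C × P | y.2 = 1} =>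
      ((x.2 : C × P).1, x.1 * (x.2 : C × P).2) := by
  refine ⟨?_, fun y => ⟨(y.2, ⟨(y.1, 1), rfl⟩), by simp⟩⟩
  rintro ⟨p, ⟨⟨c, a⟩, ha : a = 1⟩⟩ ⟨q, ⟨⟨d, b⟩, hb : b = 1⟩⟩ h
  subst ha hb
  simp only [Prod.mk.injEq, mul_one] at h
  obtain ⟨rfl, rfl⟩ := h
  rfl

variable (hC : IsComparableMod P M)

structure ComponentSection : Type where
  rep : Quotient hC.setoid → M
  mk_rep c : Quotient.mk _ (rep c) = c

namespace ComponentSection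

variable {hC}

def Le (σ τ : ComponentSection hC) : Prop := ∀ c, ∃ ρ : P, ρ • τ.rep c = σ.rep c

theorem le_refl (σ : ComponentSection hC) : σ.Le σ := fun _ => ⟨1, one_smul _ _⟩

theorem le_trans {σ τ υ : ComponentSection hC} (hστ : σ.Le τ) (hτυ : τ.Le υ) : σ.Le υ := by
  intro c
  obtain ⟨a, ha⟩ := hστ c
  obtain ⟨b, hb⟩ := hτυ c
  exact ⟨a * b, by rw [mul_smul, hb, ha]⟩

theorem exists_le_le (σ τ : ComponentSection hC) :
    ∃ υ : ComponentSection hC, σ.Le υ ∧ τ.Le υ := by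
  have h c : HaveCommonBase P (σ.rep c) (τ.rep c) :=
    Quotient.exact ((σ.mk_rep c).trans (τ.mk_rep c).symm)
  choose n ρ ρ' hρ hρ' using h
  refine ⟨⟨n, fun c => ?_⟩, fun c => ⟨ρ c, hρ c⟩, fun c => ⟨ρ' c, hρ' c⟩⟩
  rw [← hC.mk_smul (ρ c), hρ c, σ.mk_rep c]

noncomputable def transition {σ τ : ComponentSection hC} (h : σ.Le τ)
    (x : Quotient hC.setoid × P) : Quotient hC.setoid × P :=
  (x.1, x.2 * (h x.1).choose)

def eval (σ : ComponentSection hC) (x : Quotient hC.setoid × P) : M := x.2 • σ.rep x.1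

theorem mk_eval (σ : ComponentSection hC) (x : Quotient hC.setoid × P) :
    Quotient.mk _ (σ.eval x) = x.1 :=
  (hC.mk_smul _ _).trans (σ.mk_rep x.1)

theorem exists_eval_eq (m : M) : ∃ (σ : ComponentSection hC) (x : Quotient hC.setoid × P),
    σ.eval x = m := by
  classical
  refine ⟨⟨Function.update Quotient.out (Quotient.mk _ m) m, fun c => ?_⟩, (Quotient.mk _ m, 1),
    by simp [eval]⟩
  rcases eq_or_ne c (Quotient.mk _ m) with rfl | hc
  · simp
  · simp [hc]

theorem eval_transition {σ τ : ComponentSection hC} (h : σ.Le τ) (x : Quotient hC.setoid × P) :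
    τ.eval (transition h x) = σ.eval x := by
  simp only [eval, transition, mul_smul, (h x.1).choose_spec]

variable (hTF : IsTorsionFreeMod P M)
include hTF

theorem transition_of_le_refl {σ : ComponentSection hC} (h : σ.Le σ)
    (x : Quotient hC.setoid × P) : transition h x = x := by
  simp only [transition, hTF.choose_eq (h x.1) (one_smul P _), mul_one]

theorem transition_transition {σ τ υ : ComponentSection hC} (hστ : σ.Le τ) (hτυ : τ.Le υ)
    (hσυ : σ.Le υ) (x : Quotient hC.setoid × P) :
    transition hτυ (transition hστ x) = transition hσυ x := by
  simp only [transition, mul_assoc]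
  rw [hTF.choose_eq (hσυ x.1) (by rw [mul_smul, (hτυ x.1).choose_spec, (hστ x.1).choose_spec])]

theorem exists_transition_eq_of_eval_eq {σ τ : ComponentSection hC}
    {x y : Quotient hC.setoid × P} (h : σ.eval x = τ.eval y) :
    ∃ (υ : ComponentSection hC) (hσ : σ.Le υ) (hτ : τ.Le υ), transition hσ x = transition hτ y := by
  obtain ⟨c, p⟩ := x
  obtain ⟨d, q⟩ := y
  obtain rfl : c = d := by
    have hc := σ.mk_eval (c, p)
    rwa [h, τ.mk_eval, eq_comm] at hc
  obtain ⟨υ, hσ, hτ⟩ := exists_le_le σ τ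
  refine ⟨υ, hσ, hτ, Prod.ext rfl (hTF _ _ (υ.rep c) ?_)⟩
  simp only [transition, mul_smul, (hσ c).choose_spec, (hτ c).choose_spec]
  exact h

end ComponentSection

open ComponentSection in
theorem isFlatMod_of_isTorsionFreeMod_of_isComparableMod (hTF : IsTorsionFreeMod P M)
    (hC : IsComparableMod P M) : IsFlatMod P M :=
  ⟨ComponentSection hC, Le, fun _ => Quotient hC.setoid × P, fun _ p x => (x.1, p * x.2),
    fun _ _ => transition, eval, ⟨⟨Quotient.out, Quotient.out_eq⟩⟩, le_refl,
    fun _ _ _ => le_trans, exists_le_le, fun _ _ => by simp, fun _ _ _ _ => by simp [mul_assoc],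
    fun _ => ⟨_, bijective_prod_mul_of_snd_eq_one _⟩, fun _ _ _ _ _ => by simp [transition, mul_assoc],
    fun _ => transition_of_le_refl hTF, fun _ _ _ => transition_transition hTF,
    fun _ _ _ => mul_smul _ _ _, fun _ _ => eval_transition, exists_eval_eq,
    fun _ _ _ _ => exists_transition_eq_of_eval_eq hTF⟩

/-- Let `P` be an integral (commutative) monoid. A `P`-module `M` is flat
(i.e. a filtered direct limit of free `P`-modules) iff it is torsion-free and comparable. -/
theorem stmt0 (P : Type) [CommMonoid P] (hP : ∀ a b c : P, a * b = a * c → b = c)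
    (M : Type) [MulAction P M] :
    IsFlatMod P M ↔ IsTorsionFreeMod P M ∧ IsComparableMod P M := by
  have : IsLeftCancelMul P := ⟨hP⟩
  have := CommMagma.IsLeftCancelMul.toIsRightCancelMul P
  exact ⟨fun h => ⟨h.isTorsionFreeMod, h.isComparableMod⟩,
    fun ⟨hTF, hC⟩ => isFlatMod_of_isTorsionFreeMod_of_isComparableMod hTF hC⟩
end

section
/- If S is a basis of a P-module M (i.e., the map P × S → M, (p,s) ↦ p+s, is bijective), then the set {[s] : s ∈ S} is a basis of the ℤ[P]-module ℤ[M]. In particular, the functor M ↦ ℤ[M] takes free P-modules to free ℤ[P]-modules. -/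
/-!
A basis `S` makes `(p, s) ↦ p • s` an isomorphism of `P`-sets `P × S ≃ M`, with `P` acting on
the first factor. Linearizing it identifies the permutation representation `k[M]` with
`k[P × S] ≅ S →₀ k[P]`, the free representation on `S`, and the standard basis vector of the
summand `s` corresponds to `[1 • s] = [s]`.
-/

open MonoidAlgebra

namespace Representation

variable {A G V W : Type*} [CommSemiring A] [Monoid G] [AddCommMonoid V] [Module A V]
  [AddCommMonoid W] [Module A W] {ρ : Representation A G V} {σ : Representation A G W}

noncomputable def Equiv.asModuleLinearEquiv (φ : ρ.Equiv σ) :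
    ρ.asModule ≃ₗ[A[G]] σ.asModule :=
  .ofLinearMap (IntertwiningMap.equivLinearMapAsModule ρ σ φ.toIntertwiningMap)
    (IntertwiningMap.equivLinearMapAsModule σ ρ φ.symm.toIntertwiningMap)
    (LinearMap.ext φ.apply_symm_apply) (LinearMap.ext φ.symm_apply_apply)

lemma Equiv.asModuleEquiv_asModuleLinearEquiv_symm (φ : ρ.Equiv σ) (x : σ.asModule) :
    ρ.asModuleEquiv (φ.asModuleLinearEquiv.symm x) = φ.symm (σ.asModuleEquiv x) :=
  rfl

end Representation

namespace IsBasisSet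

variable {P M : Type} [CommMonoid P] [MulAction P M] {S : Set M} (hS : IsBasisSet P M S)

noncomputable def actionEquiv : P × S ≃ M := Equiv.ofBijective _ hS

lemma actionEquiv_apply (x : P × S) : hS.actionEquiv x = x.1 • (x.2 : M) := rfl

lemma actionEquiv_symm_smul (p : P) (m : M) :
    hS.actionEquiv.symm (p • m) = (p * (hS.actionEquiv.symm m).1, (hS.actionEquiv.symm m).2) := by
  rw [Equiv.symm_apply_eq, actionEquiv_apply, mul_smul, ← hS.actionEquiv_apply,
    Equiv.apply_symm_apply]

variable (k : Type*) [CommSemiring k]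

noncomputable def ofMulActionEquivFree :
    (Representation.ofMulAction k P M).Equiv (Representation.free k P S) :=
  .mk ((coeffLinearEquiv k).trans <|
      (Finsupp.domLCongr (hS.actionEquiv.symm.trans (Equiv.prodComm P S))).trans <|
      (Finsupp.curryLinearEquiv k).trans <| Finsupp.mapRange.linearEquiv (coeffLinearEquiv k).symm)
    fun p => by
      ext m
      simp [hS.actionEquiv_symm_smul]

lemma ofMulActionEquivFree_single (x : P × S) (r : k) :
    hS.ofMulActionEquivFree k (single (hS.actionEquiv x) r) =
      Finsupp.single x.2 (single x.1 r) := by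
  simp [ofMulActionEquivFree]

noncomputable def basis : Module.Basis S k[P] (Representation.ofMulAction k P M).asModule :=
  (Representation.freeAsModuleBasis k P S).map (hS.ofMulActionEquivFree k).asModuleLinearEquiv.symm

lemma asModuleEquiv_basis_apply (s : S) :
    (Representation.ofMulAction k P M).asModuleEquiv (hS.basis k s) = single (s : M) 1 := by
  rw [basis, Module.Basis.map_apply, Representation.Equiv.asModuleEquiv_asModuleLinearEquiv_symm]
  change (hS.ofMulActionEquivFree k).symm (Finsupp.single s (single 1 1)) = _
  rw [← one_smul P (s : M), ← hS.actionEquiv_apply (1, s),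
    ← hS.ofMulActionEquivFree_single k (1, s)]
  exact (hS.ofMulActionEquivFree k).symm_apply_apply _

end IsBasisSet

/-- If `S` is a basis of a `P`-module `M`, then `{[s] : s ∈ S}` is a basis of
the `ℤ[P]`-module `ℤ[M]` (the free abelian group on `M`, with `[p]·[m] = [p + m]`, realized here
as `(Representation.ofMulAction ℤ P M).asModule`). In particular, `M ↦ ℤ[M]` takes free
`P`-modules to free `ℤ[P]`-modules. -/
theorem stmt3 (P : Type) [CommMonoid P] (M : Type) [MulAction P M]
    (S : Set M) (hS : IsBasisSet P M S) :
    (∃ b : Module.Basis S (MonoidAlgebra ℤ P) (Representation.ofMulAction ℤ P M).asModule,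
        ∀ s : S, (Representation.ofMulAction ℤ P M).asModuleEquiv (b s)
          = MonoidAlgebra.ofCoeff (Finsupp.single (s : M) (1 : ℤ))) ∧
      Module.Free (MonoidAlgebra ℤ P) (Representation.ofMulAction ℤ P M).asModule := by
  refine ⟨⟨hS.basis ℤ, fun s => ?_⟩, .of_basis (hS.basis ℤ)⟩
  rw [hS.asModuleEquiv_basis_apply, ofCoeff_single]
end

section
/- For a monoid P and a P-module M, the following are equivalent: (1) there exists a finite subset S ⊆ M such that the map P × S → M, (p,s) ↦ p+s, is surjective; (2) ℤ[M] is a finitely generated ℤ[P]-module; (3) there exists a nonzero commutative ring A such that A[M] is a finitely generated A[P]-module. -/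
/-!
The `A[P]`-submodule of `A[M]` generated by the basis vectors `[s]`, `s ∈ S`, is exactly the set
of elements supported on `P • S`: this set is `P`-stable and `[p] • [s] = [p • s]`.
A finite generating set may be replaced by the basis vectors of the union of its supports, and
over a nonzero ring `[m]` is supported exactly on `{m}`.
-/

open MonoidAlgebra Pointwise

namespace Representation

variable {k : Type*} [CommSemiring k] {P : Type*} [Monoid P] {M : Type*} [MulAction P M]

variable (k P) in
noncomputable def ofMulActionSingle (m : M) : (ofMulAction k P M).asModule :=
  (ofMulAction k P M).asModuleEquiv.symm (single m 1)

lemma single_one_smul_ofMulActionSingle (p : P) (m : M) :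
    (single p 1 : k[P]) • ofMulActionSingle k P m = ofMulActionSingle k P (p • m) := by
  rw [single_smul, one_smul, ofMulActionSingle, LinearEquiv.apply_symm_apply, ofMulAction_single]
  rfl

lemma ofMulAction_mem_supported {U : Set M} (hU : ∀ p : P, ∀ m ∈ U, p • m ∈ U) (p : P)
    {x : k[M]} (hx : x ∈ supported k k U) : ofMulAction k P M p x ∈ supported k k U := by
  rw [supported_eq_span_single] at hx ⊢
  have hpx := Submodule.mem_map_of_mem (f := ofMulAction k P M p) hx
  rw [Submodule.map_span, ← Set.image_comp] at hpx
  refine Submodule.span_mono ?_ hpx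
  rintro _ ⟨m, hm, rfl⟩
  exact ⟨p • m, hU p m hm, (ofMulAction_single p m 1).symm⟩

lemma mem_span_ofMulActionSingle_iff (S : Set M) (x : (ofMulAction k P M).asModule) :
    x ∈ Submodule.span k[P] (ofMulActionSingle k P '' S) ↔
      (ofMulAction k P M).asModuleEquiv x ∈ supported k k ((Set.univ : Set P) • S) := by
  constructor
  · intro hx
    have hU : ∀ p : P, ∀ m ∈ (Set.univ : Set P) • S, p • m ∈ (Set.univ : Set P) • S := by
      rintro p _ ⟨q, -, s, hs, rfl⟩
      exact ⟨p * q, Set.mem_univ _, s, hs, mul_smul p q s⟩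
    induction hx using Submodule.span_induction with
    | mem _ h =>
      obtain ⟨s, hs, rfl⟩ := h
      rw [ofMulActionSingle, LinearEquiv.apply_symm_apply, supported_eq_span_single]
      exact Submodule.subset_span ⟨s, ⟨1, Set.mem_univ _, s, hs, one_smul P s⟩, rfl⟩
    | zero => exact zero_mem _
    | add _ _ _ _ hx hy => simpa using add_mem hx hy
    | smul r x _ hx =>
      rw [asModuleEquiv_map_smul]
      exact asAlgebraHom_mem_of_forall_mem _ _ (fun p _ => ofMulAction_mem_supported hU p) _ hx r
  · intro hx
    set N := Submodule.span k[P] (ofMulActionSingle k P '' S)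
    have hsupported : supported k k ((Set.univ : Set P) • S) ≤
        (N.restrictScalars k).comap (ofMulAction k P M).asModuleEquiv.symm.toLinearMap := by
      rw [supported_eq_span_single, Submodule.span_le]
      rintro _ ⟨_, ⟨p, -, s, hs, rfl⟩, rfl⟩
      change ofMulActionSingle k P (p • s) ∈ N
      rw [← single_one_smul_ofMulActionSingle]
      exact N.smul_mem _ (Submodule.subset_span ⟨s, hs, rfl⟩)
    simpa using hsupported hx

lemma span_ofMulActionSingle_eq_top_iff [Nontrivial k] (S : Set M) :
    Submodule.span k[P] (ofMulActionSingle k P '' S) = ⊤ ↔ (Set.univ : Set P) • S = Set.univ := by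
  constructor
  · refine fun h => Set.eq_univ_of_forall fun m => ?_
    have hm := (mem_span_ofMulActionSingle_iff S (ofMulActionSingle k P m)).1 (h ▸ Submodule.mem_top)
    rwa [ofMulActionSingle, LinearEquiv.apply_symm_apply, mem_supported, coeff_single,
      Finsupp.support_single _ one_ne_zero, Finset.coe_singleton, Set.singleton_subset_iff] at hm
  · refine fun h => eq_top_iff.2 fun x _ => (mem_span_ofMulActionSingle_iff S x).2 ?_
    rw [h, mem_supported]
    exact Set.subset_univ _

theorem finite_ofMulAction_asModule_iff [Nontrivial k] :
    Module.Finite k[P] (ofMulAction k P M).asModule ↔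
      ∃ S : Finset M, (Set.univ : Set P) • (S : Set M) = Set.univ := by
  classical
  constructor
  · rintro ⟨T, hT⟩
    refine ⟨T.biUnion fun t => ((ofMulAction k P M).asModuleEquiv t).coeff.support, ?_⟩
    rw [← span_ofMulActionSingle_eq_top_iff (k := k), eq_top_iff, ← hT, Submodule.span_le]
    intro t ht
    rw [SetLike.mem_coe, mem_span_ofMulActionSingle_iff, mem_supported]
    intro m hm
    exact ⟨1, Set.mem_univ _, m, Finset.mem_biUnion.2 ⟨t, ht, hm⟩, one_smul P m⟩
  · rintro ⟨S, hS⟩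
    refine ⟨⟨S.image (ofMulActionSingle k P), ?_⟩⟩
    rw [Finset.coe_image, span_ofMulActionSingle_eq_top_iff, hS]

end Representation

/-- For a monoid `P` and a `P`-module `M`, the following are equivalent:
(1) there is a finite subset `S ⊆ M` such that `(p, s) ↦ p • s` is surjective onto `M`;
(2) `ℤ[M]` is a finitely generated `ℤ[P]`-module;
(3) there is a nonzero commutative ring `A` such that `A[M]` is a finitely generated
`A[P]`-module.  Here `A[M]` is realized as `(Representation.ofMulAction A P M).asModule`. -/
theorem stmt4 (P : Type) [CommMonoid P] (M : Type) [MulAction P M] :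
    List.TFAE [
      ∃ S : Finset M, ∀ m : M, ∃ p : P, ∃ s ∈ S, p • s = m,
      Module.Finite (MonoidAlgebra ℤ P) (Representation.ofMulAction ℤ P M).asModule,
      ∃ (A : Type) (_ : CommRing A), Nontrivial A ∧
        Module.Finite (MonoidAlgebra A P) (Representation.ofMulAction A P M).asModule] := by
  have translates_cover_iff (S : Finset M) :
      (∀ m : M, ∃ p : P, ∃ s ∈ S, p • s = m) ↔ (Set.univ : Set P) • (S : Set M) = Set.univ := by
    simp [Set.eq_univ_iff_forall, Set.mem_smul]
  simp_rw [translates_cover_iff]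
  tfae_have 1 ↔ 2 := Representation.finite_ofMulAction_asModule_iff.symm
  tfae_have 2 → 3 := fun h => ⟨ℤ, inferInstance, inferInstance, h⟩
  tfae_have 3 → 1 := fun ⟨A, _, _, h⟩ => Representation.finite_ofMulAction_asModule_iff.1 h
  tfae_finish
end

section
/- If P is a finitely generated monoid, M is a finitely generated P-module, and N is a P-submodule of M, then N is a finitely generated P-module. -/
/-!
Choose finitely many generators `g₁, …, gₖ` of `P`, so that every element of `P` is a monomial
`g ^ e = ∏ gᵢ ^ eᵢ` with `e ∈ ℕᵏ`. For a generator `s` of `M`, the exponents `e` with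
`g ^ e • s ∈ N` form a subset of `ℕᵏ`, whose finitely many minimal elements (Dickson's lemma)
dominate all of it. If `e' ≤ e` is such a minimal element, then
`g ^ e • s = g ^ (e - e') • (g ^ e' • s)`, so the finitely many `g ^ e' • s` generate `N`.
-/

open Finset

theorem Set.IsPWO.exists_finset_subset_forall_exists_le {α : Type*} [PartialOrder α]
    {s : Set α} (hs : s.IsPWO) : ∃ F : Finset α, ↑F ⊆ s ∧ ∀ a ∈ s, ∃ b ∈ F, b ≤ a := by
  have hfin : {x | Minimal (· ∈ s) x}.Finite :=
    (setOfPred_minimal_antichain _).finite_of_partiallyWellOrderedOn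
      (hs.mono fun _ hx ↦ hx.prop)
  refine ⟨hfin.toFinset, fun x hx ↦ (hfin.mem_toFinset.1 hx).prop, fun a ha ↦ ?_⟩
  obtain ⟨b, hba, hb⟩ := hs.exists_le_minimal ha
  exact ⟨b, hfin.mem_toFinset.2 hb, hba⟩

theorem Monoid.FG.exists_finset_subset_forall_smul_eq {P M : Type*} [CommMonoid P]
    [MulAction P M] (hP : Monoid.FG P) (s : M) (N : Set M) :
    ∃ T : Finset M, ↑T ⊆ N ∧ ∀ p : P, p • s ∈ N → ∃ q : P, ∃ t ∈ T, q • t = p • s := by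
  classical
  obtain ⟨G, hG⟩ := hP.fg_top
  let φ : (G → ℕ) → P := fun e ↦ ∏ i : G, (i : P) ^ e i
  have hφ_surj : ∀ p, ∃ e, φ e = p := fun p ↦
    (Submonoid.mem_closure_finset'.1 (hG ▸ Submonoid.mem_top p)).imp fun _ h ↦ h.symm
  have hφ_add : ∀ e e', φ (e + e') = φ e * φ e' := fun e e' ↦ by
    simp only [φ, Pi.add_apply, pow_add, prod_mul_distrib]
  obtain ⟨F, hFN, hF⟩ :=
    (Set.isPWO_of_wellQuasiOrderedLE {e | φ e • s ∈ N}).exists_finset_subset_forall_exists_le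
  refine ⟨F.image (φ · • s), ?_, fun p hp ↦ ?_⟩
  · simpa [Set.subset_def] using hFN
  obtain ⟨e, rfl⟩ := hφ_surj p
  obtain ⟨e', he'F, he'e⟩ := hF e hp
  exact ⟨φ (e - e'), φ e' • s, mem_image_of_mem _ he'F,
    by rw [smul_smul, ← hφ_add, tsub_add_cancel_of_le he'e]⟩

theorem stmt5_general (P : Type) [CommMonoid P] (hP : Monoid.FG P)
    (M : Type) [MulAction P M]
    (hM : ∃ S : Finset M, ∀ m : M, ∃ p : P, ∃ s ∈ S, p • s = m)
    (N : Set M) :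
    ∃ T : Finset M, ↑T ⊆ N ∧ ∀ n ∈ N, ∃ p : P, ∃ t ∈ T, p • t = n := by
  classical
  obtain ⟨S, hS⟩ := hM
  choose T hTN hT using fun s : M ↦ hP.exists_finset_subset_forall_smul_eq s N
  refine ⟨S.biUnion T, fun t ht ↦ ?_, fun n hn ↦ ?_⟩
  · obtain ⟨s, -, hts⟩ := mem_biUnion.1 ht
    exact hTN s hts
  obtain ⟨p, s, hs, rfl⟩ := hS n
  obtain ⟨q, t, ht, hqt⟩ := hT s p hn
  exact ⟨q, t, mem_biUnion.2 ⟨s, hs, ht⟩, hqt⟩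

/-- If `P` is a finitely generated monoid, `M` is a finitely generated
`P`-module and `N` is a `P`-submodule of `M`, then `N` is a finitely generated `P`-module. -/
theorem stmt5 (P : Type) [CommMonoid P] (hP : Monoid.FG P)
    (M : Type) [MulAction P M]
    (hM : ∃ S : Finset M, ∀ m : M, ∃ p : P, ∃ s ∈ S, p • s = m)
    (N : Set M) (hN : ∀ (p : P), ∀ n ∈ N, p • n ∈ N) :
    ∃ T : Finset M, ↑T ⊆ N ∧ ∀ n ∈ N, ∃ p : P, ∃ t ∈ T, p • t = n :=
  stmt5_general P hP M hM N
end

section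
/- Let P be a fine (finitely generated and integral) monoid and M a finitely generated flat P-module. Then M is free with a finite basis. -/
/-!
A flat module over an integral monoid is torsion-free and comparable, both properties passing
from the free modules of the system to their direct limit. Call two elements related when their
orbits meet; comparability makes every finite set of mutually related elements a multiple of a
single element. Choosing one such common divisor for the finitely many classes met by a finite
generating set gives a finite set that generates and meets each orbit class once, and torsion-
freeness makes it a basis.
-/

section FreeAndFlat

variable {P : Type} [CommMonoid P] {N M : Type} [MulAction P N] [MulAction P M]

theorem IsBasisSet.isTorsionFreeMod [IsRightCancelMul P] {S : Set N} (hS : IsBasisSet P N S) :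
    IsTorsionFreeMod P N := by
  intro p q y h
  obtain ⟨⟨r, s⟩, rfl⟩ := hS.2 y
  have := @hS.1 (p * r, s) (q * r, s) (by simpa only [mul_smul] using h)
  exact mul_right_cancel (congrArg Prod.fst this)

theorem IsBasisSet.isComparableMod {S : Set N} (hS : IsBasisSet P N S) :
    IsComparableMod P N := by
  intro p₁ p₂ y₁ y₂ h
  obtain ⟨⟨q₁, s₁⟩, rfl⟩ := hS.2 y₁
  obtain ⟨⟨q₂, s₂⟩, rfl⟩ := hS.2 y₂
  have := @hS.1 (p₁ * q₁, s₁) (p₂ * q₂, s₂) (by simpa only [mul_smul] using h)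
  obtain rfl : s₁ = s₂ := congrArg Prod.snd this
  exact ⟨s₁, q₁, q₂, rfl, rfl⟩

theorem IsFlatMod.isTorsionFreeMod_and_isComparableMod [IsRightCancelMul P]
    (hflat : IsFlatMod P M) : IsTorsionFreeMod P M ∧ IsComparableMod P M := by
  obtain ⟨ι, r, F, act, t, g, -, -, -, hdir, h1, hmul, hfree, hteq, -, -, hgeq, hgt, hex, hrel⟩ :=
    hflat
  let _ (i : ι) : MulAction P (F i) := { smul := act i, one_smul := h1 i, mul_smul := hmul i }
  have hF (i : ι) : IsTorsionFreeMod P (F i) ∧ IsComparableMod P (F i) :=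
    let ⟨S, hS⟩ := hfree i
    ⟨IsBasisSet.isTorsionFreeMod (S := S) hS, IsBasisSet.isComparableMod (S := S) hS⟩
  constructor
  · intro p p' m h
    obtain ⟨i, x, rfl⟩ := hex m
    obtain ⟨k, _, _, hk⟩ := hrel i i (act i p x) (act i p' x) (by rw [hgeq, hgeq, h])
    rw [hteq, hteq] at hk
    exact (hF k).1 p p' _ hk
  · intro p₁ p₂ m₁ m₂ h
    obtain ⟨i, x₁, rfl⟩ := hex m₁
    obtain ⟨j, x₂, rfl⟩ := hex m₂
    obtain ⟨k, hik, hjk⟩ := hdir i j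
    obtain ⟨l, _, _, hl⟩ := hrel k k (act k p₁ (t i k hik x₁)) (act k p₂ (t j k hjk x₂))
      (by rw [hgeq, hgeq, hgt, hgt, h])
    rw [hteq, hteq] at hl
    obtain ⟨z, ρ₁, ρ₂, hz₁, hz₂⟩ := (hF l).2 p₁ p₂ _ _ hl
    refine ⟨g l z, ρ₁, ρ₂, ?_, ?_⟩
    · rw [← hgeq, (show act l ρ₁ z = _ from hz₁), hgt, hgt]
    · rw [← hgeq, (show act l ρ₂ z = _ from hz₂), hgt, hgt]

end FreeAndFlat

section OrbitsMeet

variable (P : Type) [CommMonoid P] {M : Type} [MulAction P M]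

def OrbitsMeet (a b : M) : Prop := ∃ p q : P, p • a = q • b

theorem orbitsMeet_equivalence : Equivalence (OrbitsMeet P (M := M)) where
  refl a := ⟨1, 1, rfl⟩
  symm := fun ⟨p, q, h⟩ => ⟨q, p, h.symm⟩
  trans := fun ⟨p, q, h⟩ ⟨p', q', h'⟩ =>
    ⟨p' * p, q * q', by rw [mul_smul, h, ← mul_smul, mul_comm, mul_smul, h', ← mul_smul]⟩

def orbitsMeetSetoid (M : Type) [MulAction P M] : Setoid M :=
  ⟨OrbitsMeet P, orbitsMeet_equivalence P⟩

variable {P}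

theorem orbitsMeet_smul_left (p : P) (a : M) : OrbitsMeet P (p • a) a := ⟨1, p, one_smul P _⟩

theorem IsComparableMod.exists_common_divisor (hcmp : IsComparableMod P M) (c : M)
    (T : Finset M) (hT : ∀ a ∈ T, OrbitsMeet P c a) :
    ∃ d, OrbitsMeet P c d ∧ ∀ a ∈ T, ∃ p : P, p • d = a := by
  classical
  induction T using Finset.induction_on with
  | empty => exact ⟨c, (orbitsMeet_equivalence P).refl c, by simp⟩
  | insert a T _ ih =>
    obtain ⟨d, hcd, hdT⟩ := ih fun b hb => hT b (Finset.mem_insert_of_mem hb)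
    have hda : OrbitsMeet P d a :=
      (orbitsMeet_equivalence P).trans ((orbitsMeet_equivalence P).symm hcd)
        (hT a (Finset.mem_insert_self a T))
    obtain ⟨p, q, hpq⟩ := hda
    obtain ⟨m, ρ₁, ρ₂, rfl, rfl⟩ := hcmp p q d a hpq
    refine ⟨m, (orbitsMeet_equivalence P).trans hcd (orbitsMeet_smul_left ρ₁ m), ?_⟩
    simp only [Finset.mem_insert, forall_eq_or_imp]
    refine ⟨⟨ρ₂, rfl⟩, fun b hb => ?_⟩
    obtain ⟨r, rfl⟩ := hdT b hb
    exact ⟨r * ρ₁, mul_smul r ρ₁ m⟩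

theorem isBasisSet_of_generates_of_pairwise (htf : IsTorsionFreeMod P M) {B : Set M}
    (hgen : ∀ m : M, ∃ p : P, ∃ b ∈ B, p • b = m)
    (hsep : ∀ b ∈ B, ∀ b' ∈ B, OrbitsMeet P b b' → b = b') : IsBasisSet P M B := by
  refine ⟨?_, fun m => ?_⟩
  · rintro ⟨p, b, hb⟩ ⟨p', b', hb'⟩ (h : p • b = p' • b')
    obtain rfl := hsep b hb b' hb' ⟨p, p', h⟩
    obtain rfl := htf p p' b h
    rfl
  · obtain ⟨p, b, hb, rfl⟩ := hgen m
    exact ⟨(p, ⟨b, hb⟩), rfl⟩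

theorem exists_finite_basis_of_torsionFree_of_comparable (htf : IsTorsionFreeMod P M)
    (hcmp : IsComparableMod P M) (hMfg : ∃ S : Finset M, ∀ m : M, ∃ p : P, ∃ s ∈ S, p • s = m) :
    ∃ S : Set M, S.Finite ∧ IsBasisSet P M S := by
  classical
  obtain ⟨S, hS⟩ := hMfg
  let _ := orbitsMeetSetoid P M
  have hdiv : ∀ q : Quotient (orbitsMeetSetoid P M), ∃ d : M, ⟦d⟧ = q ∧
      ∀ a ∈ S, ⟦a⟧ = q → ∃ p : P, p • d = a := by
    refine Quotient.ind fun c => ?_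
    obtain ⟨d, hcd, hd⟩ := hcmp.exists_common_divisor c (S.filter fun a => ⟦a⟧ = ⟦c⟧)
      fun a ha => Quotient.exact (Finset.mem_filter.mp ha).2.symm
    exact ⟨d, (Quotient.sound hcd).symm, fun a ha hac => hd a (Finset.mem_filter.mpr ⟨ha, hac⟩)⟩
  choose d hdq hd using hdiv
  refine ⟨S.image fun s => d ⟦s⟧, Finset.finite_toSet _,
    isBasisSet_of_generates_of_pairwise htf (fun m => ?_) ?_⟩
  · obtain ⟨p, s, hs, rfl⟩ := hS m
    obtain ⟨q, hq⟩ := hd ⟦s⟧ s hs rfl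
    exact ⟨p * q, d ⟦s⟧, Finset.mem_image_of_mem _ hs, by rw [mul_smul, hq]⟩
  · simp only [Finset.coe_image, Set.mem_image, Finset.mem_coe]
    rintro _ ⟨s, -, rfl⟩ _ ⟨s', -, rfl⟩ h
    rw [← hdq ⟦s⟧, ← hdq ⟦s'⟧, Quotient.sound h]

end OrbitsMeet

theorem stmt6_general (P : Type) [CommMonoid P]
    (hint : ∀ a b c : P, a * b = a * c → b = c)
    (M : Type) [MulAction P M]
    (hMfg : ∃ S : Finset M, ∀ m : M, ∃ p : P, ∃ s ∈ S, p • s = m)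
    (hflat : IsFlatMod P M) :
    ∃ S : Set M, S.Finite ∧ IsBasisSet P M S := by
  have : IsLeftCancelMul P := ⟨hint⟩
  have := CommMagma.IsLeftCancelMul.toIsCancelMul P
  obtain ⟨htf, hcmp⟩ := hflat.isTorsionFreeMod_and_isComparableMod
  exact exists_finite_basis_of_torsionFree_of_comparable htf hcmp hMfg

/-- **monoidal Quillen–Suslin.** Let `P` be a fine (finitely generated and
integral) monoid and `M` a finitely generated flat `P`-module. Then `M` is a free `P`-module
with a finite basis. -/
theorem stmt6 (P : Type) [CommMonoid P] (hfg : Monoid.FG P)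
    (hint : ∀ a b c : P, a * b = a * c → b = c)
    (M : Type) [MulAction P M]
    (hMfg : ∃ S : Finset M, ∀ m : M, ∃ p : P, ∃ s ∈ S, p • s = m)
    (hflat : IsFlatMod P M) :
    ∃ S : Set M, S.Finite ∧ IsBasisSet P M S :=
  stmt6_general P hint M hMfg hflat
end

section
/- Let h : Q → P be an injective map of integral monoids such that the induced map of sharpenings h̄ : Q̄ → P̄ is flat. Then h is flat (P is a flat Q-module). -/
/-- The congruence relation on a commutative monoid identifying elements that differ by a unit.
The quotient is the sharpening `P̄ = P/P*`. -/
def unitsCon (P : Type) [CommMonoid P] : Con P where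
  r a b := ∃ u : Pˣ, a * (u : P) = b
  iseqv :=
    { refl := fun a => ⟨1, by simp⟩
      symm := by
        rintro a b ⟨u, rfl⟩
        exact ⟨u⁻¹, by rw [mul_assoc, Units.mul_inv, mul_one]⟩
      trans := by
        rintro a b c ⟨u, rfl⟩ ⟨v, rfl⟩
        exact ⟨u * v, by rw [Units.val_mul, mul_assoc]⟩ }
  mul' := by
    rintro w x y z ⟨u, rfl⟩ ⟨v, rfl⟩
    exact ⟨u * v, by rw [Units.val_mul, mul_mul_mul_comm]⟩

/-- The sharpening `P̄ = P/P*` of a commutative monoid. -/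
abbrev SharpMon (P : Type) [CommMonoid P] : Type := (unitsCon P).Quotient

/-- The monoid homomorphism `Q̄ → P̄` induced on sharpenings by `h : Q →* P`. -/
def sharpHom {Q P : Type} [CommMonoid Q] [CommMonoid P] (h : Q →* P) :
    SharpMon Q →* SharpMon P :=
  Con.lift _ ((unitsCon P).mk'.comp h) (by
    rintro a b ⟨u, rfl⟩
    show ((h a : P) : SharpMon P) = ((h (a * (u : Q)) : P) : SharpMon P)
    refine (Con.eq _).mpr ⟨Units.map (h : Q →* P) u, ?_⟩
    simp [map_mul])

/-- The `Q`-module structure on `P` induced by a monoid homomorphism `h : Q →* P`,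
with action `q • p = h q * p`. -/
def mulActionOfHom {Q P : Type} [Monoid Q] [Monoid P] (h : Q →* P) : MulAction Q P where
  smul q p := h q * p
  one_smul p := show h 1 * p = p by rw [map_one, one_mul]
  mul_smul q q' p := show h (q * q') * p = h q * (h q' * p) by rw [map_mul, mul_assoc]

/-
Pull the filtered system of free `Q̄`-modules `Fᵢ → P̄` back along `P → P̄`: the fibre products
`Fᵢ ×_{P̄} P` form a filtered system of `Q`-modules with limit `P`. If `Fᵢ` is free on `S`, then
`Fᵢ ×_{P̄} P` is free on the pairs `(s, p)` with `s ∈ S` and `p` a chosen representative of its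
`Q*`-orbit: an element `(q̄ • s, p)` factors as `h q * p'`, and cancellativity of `P` together with
injectivity of `h` make this factorization unique.
-/

section Sharpening

variable {Q P : Type} [CommMonoid Q] [CommMonoid P] (h : Q →* P)

theorem sharpMon_coe_eq_coe_iff {p p' : P} :
    (p : SharpMon P) = p' ↔ ∃ u : Pˣ, p * u = p' :=
  Con.eq _

theorem sharpMon_coe_unit_mul (u : Pˣ) (p : P) : ((u * p : P) : SharpMon P) = p :=
  sharpMon_coe_eq_coe_iff.mpr ⟨u⁻¹, by rw [mul_comm, ← mul_assoc, Units.inv_mul, one_mul]⟩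

theorem sharpHom_coe (q : Q) : sharpHom h q = ((h q : P) : SharpMon P) := rfl

def unitsOrbitSetoid : Setoid P where
  r p p' := ∃ v : Qˣ, p = h v * p'
  iseqv :=
    { refl := fun p => ⟨1, by simp⟩
      symm := by
        rintro _ p ⟨v, rfl⟩
        exact ⟨v⁻¹, by rw [← mul_assoc, ← map_mul, Units.inv_mul, map_one, one_mul]⟩
      trans := by
        rintro _ _ p ⟨v, rfl⟩ ⟨w, rfl⟩
        exact ⟨v * w, by rw [Units.val_mul, map_mul, mul_assoc]⟩ }

noncomputable def orbitRep (p : P) : P := (Quotient.mk (unitsOrbitSetoid h) p).out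

theorem exists_eq_mul_orbitRep (p : P) : ∃ v : Qˣ, p = h v * orbitRep h p :=
  (unitsOrbitSetoid h).symm (Quotient.mk_out p)

theorem orbitRep_eq_of_eq_mul {p p' : P} (v : Qˣ) (hp : p = h v * p') :
    orbitRep h p = orbitRep h p' :=
  congrArg Quotient.out (Quotient.sound ⟨v, hp⟩)

theorem orbitRep_orbitRep (p : P) : orbitRep h (orbitRep h p) = orbitRep h p := by
  obtain ⟨v, hv⟩ := exists_eq_mul_orbitRep h p
  exact (orbitRep_eq_of_eq_mul h v hv).symm

theorem sharpMon_coe_orbitRep (p : P) : ((orbitRep h p : P) : SharpMon P) = p := by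
  obtain ⟨v, hv⟩ := exists_eq_mul_orbitRep h p
  conv_rhs => rw [hv, ← Units.coe_map (h : Q →* P) v]
  rw [sharpMon_coe_unit_mul]

theorem eq_and_eq_of_mul_orbitRep_eq (hP : ∀ a b c : P, a * b = a * c → b = c)
    (hinj : Function.Injective h) {q q' : Q} {p p' : P}
    (hq : (q : SharpMon Q) = q') (hp : orbitRep h p = p) (hp' : orbitRep h p' = p')
    (heq : h q * p = h q' * p') : q = q' ∧ p = p' := by
  obtain ⟨u, rfl⟩ := sharpMon_coe_eq_coe_iff.mp hq
  have hpu : p = h u * p' := hP (h q) _ _ (by rw [heq, map_mul, mul_assoc])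
  have hpp' : p = p' := by rw [← hp, ← hp', orbitRep_eq_of_eq_mul h u hpu]
  subst hpp'
  refine ⟨hinj (hP p _ _ ?_), rfl⟩
  rw [mul_comm p, heq, mul_comm]

theorem exists_mul_orbitRep_eq (p : P) (q₀ : Q) (c : SharpMon P)
    (hp : (p : SharpMon P) = ((h q₀ : P) : SharpMon P) * c) :
    ∃ (q : Q) (p' : P), (q : SharpMon Q) = q₀ ∧ (p' : SharpMon P) = c ∧
      orbitRep h p' = p' ∧ h q * p' = p := by
  induction c using Con.induction_on with | H p₁ => ?_
  rw [← Con.coe_mul] at hp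
  obtain ⟨u, hu⟩ := sharpMon_coe_eq_coe_iff.mp hp.symm
  obtain ⟨v, hv⟩ := exists_eq_mul_orbitRep h (p₁ * u)
  refine ⟨q₀ * v, orbitRep h (p₁ * u),
    sharpMon_coe_eq_coe_iff.mpr ⟨v⁻¹, by simp [mul_assoc]⟩, ?_, orbitRep_orbitRep h _, ?_⟩
  · rw [sharpMon_coe_orbitRep, mul_comm, sharpMon_coe_unit_mul]
  · rw [map_mul, mul_assoc, ← hv, ← mul_assoc, hu]

end Sharpening

section Pullback

variable {Q P : Type} [CommMonoid Q] [CommMonoid P] (h : Q →* P)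
variable {F : Type} (act : SharpMon Q → F → F) (g : F → SharpMon P)

def SharpPullback : Type := {xp : F × P // g xp.1 = xp.2}

def pullbackAct (hg : ∀ q x, g (act q x) = sharpHom h q * g x) (q : Q) (y : SharpPullback g) :
    SharpPullback g :=
  ⟨(act q y.1.1, h q * y.1.2), by rw [hg, y.2, sharpHom_coe, Con.coe_mul]⟩

variable {h act g}

theorem pullbackAct_one (hg : ∀ q x, g (act q x) = sharpHom h q * g x)
    (hone : ∀ x, act 1 x = x) (y : SharpPullback g) : pullbackAct h act g hg 1 y = y :=
  Subtype.ext (Prod.ext (hone _) (by simp only [pullbackAct, map_one, one_mul]))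

theorem pullbackAct_mul (hg : ∀ q x, g (act q x) = sharpHom h q * g x)
    (hmul : ∀ q q' x, act (q * q') x = act q (act q' x)) (q q' : Q) (y : SharpPullback g) :
    pullbackAct h act g hg (q * q') y = pullbackAct h act g hg q (pullbackAct h act g hg q' y) :=
  Subtype.ext (Prod.ext (hmul q q' y.1.1) (by simp only [pullbackAct, map_mul, mul_assoc]))

theorem pullbackAct_bijective (hP : ∀ a b c : P, a * b = a * c → b = c)
    (hinj : Function.Injective h) (hg : ∀ q x, g (act q x) = sharpHom h q * g x)
    {S : Set F} (hS : Function.Bijective fun x : SharpMon Q × S => act x.1 x.2) :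
    Function.Bijective
      fun y : Q × {y : SharpPullback g | y.1.1 ∈ S ∧ orbitRep h y.1.2 = y.1.2} =>
        pullbackAct h act g hg y.1 y.2 := by
  constructor
  · rintro ⟨q, ⟨⟨x, p⟩, hxp⟩, hx, hp⟩ ⟨q', ⟨⟨x', p'⟩, hxp'⟩, hx', hp'⟩ heq
    have hact : act q x = act q' x' := congrArg (fun y => y.1.1) heq
    have hmul : h q * p = h q' * p' := congrArg (fun y => y.1.2) heq
    obtain ⟨hqq', hxx'⟩ :=
      Prod.ext_iff.mp (hS.1 (a₁ := (q, ⟨x, hx⟩)) (a₂ := (q', ⟨x', hx'⟩)) hact)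
    obtain ⟨rfl, rfl⟩ := eq_and_eq_of_mul_orbitRep_eq h hP hinj hqq' hp hp' hmul
    obtain rfl : x = x' := congrArg Subtype.val hxx'
    rfl
  · rintro ⟨⟨x, p⟩, hxp⟩
    obtain ⟨⟨q₀, s, hs⟩, rfl⟩ := hS.2 x
    induction q₀ using Con.induction_on with | H q₀ => ?_
    obtain ⟨q, p', hq, hp', hrep, rfl⟩ :=
      exists_mul_orbitRep_eq h p q₀ (g s) (by rw [← hxp, hg, sharpHom_coe])
    refine ⟨(q, ⟨⟨(s, p'), hp'.symm⟩, hs, hrep⟩), Subtype.ext (Prod.ext ?_ rfl)⟩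
    exact congrArg (act · s) hq

def pullbackMap {F' : Type} {g' : F' → SharpMon P} (t : F → F') (ht : ∀ x, g' (t x) = g x)
    (y : SharpPullback g) : SharpPullback g' :=
  ⟨(t y.1.1, y.1.2), by rw [ht, y.2]⟩

end Pullback

theorem stmt9_general (Q P : Type) [CommMonoid Q] [CommMonoid P]
    (hP : ∀ a b c : P, a * b = a * c → b = c)
    (h : Q →* P) (hinj : Function.Injective h)
    (hbar : @IsFlatMod (SharpMon Q) _ (SharpMon P) (mulActionOfHom (sharpHom h))) :
    @IsFlatMod Q _ P (mulActionOfHom h) := by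
  obtain ⟨ι, r, F, act, t, g, hne, hrefl, htrans, hdir, hone, hmul, hfree, ht_act, ht_id,
    ht_comp, hg_act, hg_t, hg_surj, hg_eq⟩ := hbar
  refine ⟨ι, r, fun i => SharpPullback (g i), fun i => pullbackAct h (act i) (g i) (hg_act i),
    fun i j hij => pullbackMap (t i j hij) (hg_t i j hij), fun i y => y.1.2,
    hne, hrefl, htrans, hdir, fun i => pullbackAct_one _ (hone i),
    fun i => pullbackAct_mul _ (hmul i),
    fun i => (hfree i).elim fun _ hS => ⟨_, pullbackAct_bijective hP hinj _ hS⟩,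
    fun i j hij q y => Subtype.ext (Prod.ext (ht_act i j hij q y.1.1) rfl),
    fun i hii y => Subtype.ext (Prod.ext (ht_id i hii y.1.1) rfl),
    fun i j k hij hjk hik y => Subtype.ext (Prod.ext (ht_comp i j k hij hjk hik y.1.1) rfl),
    fun _ _ _ => rfl, fun _ _ _ _ => rfl, fun p => ?_, ?_⟩
  · obtain ⟨i, x, hx⟩ := hg_surj p
    exact ⟨i, ⟨(x, p), hx⟩, rfl⟩
  · rintro i j ⟨⟨x, p⟩, hx⟩ ⟨⟨y, p'⟩, hy⟩ (rfl : p = p')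
    obtain ⟨k, hik, hjk, hxy⟩ := hg_eq i j x y (hx.trans hy.symm)
    exact ⟨k, hik, hjk, Subtype.ext (Prod.ext hxy rfl)⟩

/-- Let `h : Q → P` be an injective map of integral (commutative) monoids such
that the induced map of sharpenings `h̄ : Q̄ → P̄` is flat (i.e. `P̄` is a flat `Q̄`-module via
`h̄`). Then `h` is flat (`P` is a flat `Q`-module via `h`). -/
theorem stmt9 (Q P : Type) [CommMonoid Q] [CommMonoid P]
    (hQ : ∀ a b c : Q, a * b = a * c → b = c)
    (hP : ∀ a b c : P, a * b = a * c → b = c)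
    (h : Q →* P) (hinj : Function.Injective h)
    (hbar : @IsFlatMod (SharpMon Q) _ (SharpMon P) (mulActionOfHom (sharpHom h))) :
    @IsFlatMod Q _ P (mulActionOfHom h) :=
  stmt9_general Q P hP h hinj hbar
end

section
/- For every m ≥ 1, the diagonal map Δ : ℕ → ℕ^m is free with basis S = {s ∈ ℕ^m : s_i = 0 for some i}, and Δ is vertical with cokernel ℤ^{m-1} (i.e., the cokernel monoid ℕ^m/Δ(ℕ) is a group isomorphic to ℤ^{m-1}). -/
/-!
Every `y : ι → ℕ` splits uniquely as `Δ(q) + s` with `q = min y` and `s = y - Δ(q)`, which has a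
zero coordinate. For the cokernel, `a ↦ (a (i+1) - a 0)ᵢ : ℕ^(n+1) → ℤ^n` is a surjective
homomorphism killing `Δ(ℕ)`, and if `a` and `b` have the same image then
`a ∼ Δ(b 0) + a = Δ(a 0) + b ∼ b`; so the cokernel congruence is its kernel.
-/

section Diagonal

variable {ι : Type*}

def diagonalShift (ι : Type*) (a b : ι → ℕ) : Prop :=
  ∃ n : ℕ, a = fun i => n + b i

def diagonalAdd (ι : Type*) (x : ℕ × {s : ι → ℕ // ∃ i, s i = 0}) : ι → ℕ :=
  fun i => x.1 + (x.2 : ι → ℕ) i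

theorem diagonalAdd_injective : Function.Injective (diagonalAdd ι) := by
  rintro ⟨q, s, i, hi⟩ ⟨q', s', i', hi'⟩ h
  have h_apply (k : ι) : q + s k = q' + s' k := congrFun h k
  have hq : q = q' := by
    have := h_apply i
    have := h_apply i'
    omega
  subst hq
  exact Prod.ext rfl (Subtype.ext (funext fun k => show s k = s' k by have := h_apply k; omega))

theorem diagonalAdd_surjective [Finite ι] [Nonempty ι] : Function.Surjective (diagonalAdd ι) := by
  intro y
  obtain ⟨i, hi⟩ := Finite.exists_min y
  refine ⟨⟨y i, fun k => y k - y i, i, Nat.sub_self _⟩, funext fun k => ?_⟩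
  exact Nat.add_sub_cancel' (hi k)

theorem diagonalAdd_bijective [Finite ι] [Nonempty ι] : Function.Bijective (diagonalAdd ι) :=
  ⟨diagonalAdd_injective, diagonalAdd_surjective⟩

end Diagonal

section Cokernel

variable {n : ℕ}

def succSubZero (n : ℕ) : (Fin (n + 1) → ℕ) →+ (Fin n → ℤ) where
  toFun a j := (a j.succ : ℤ) - a 0
  map_zero' := by
    funext j
    simp
  map_add' a b := by
    funext j
    simp only [Pi.add_apply, Nat.cast_add]
    ring

theorem succSubZero_apply (a : Fin (n + 1) → ℕ) (j : Fin n) :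
    succSubZero n a j = (a j.succ : ℤ) - a 0 :=
  rfl

theorem succSubZero_surjective : Function.Surjective (succSubZero n) := by
  intro z
  obtain ⟨N, hN⟩ : ∃ N : ℕ, ∀ j, 0 ≤ N + z j :=
    ⟨∑ j, (z j).natAbs, fun j => by
      have := Finset.single_le_sum (fun k _ => Nat.zero_le (z k).natAbs) (Finset.mem_univ j)
      omega⟩
  refine ⟨Fin.cons N fun j => (N + z j).toNat, funext fun j => ?_⟩
  have := hN j
  simp only [succSubZero_apply, Fin.cons_succ, Fin.cons_zero]
  omega

theorem add_const_eq_of_succSubZero_eq {a b : Fin (n + 1) → ℕ}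
    (h : succSubZero n a = succSubZero n b) :
    (fun i => b 0 + a i) = fun i => a 0 + b i := by
  funext i
  cases i using Fin.cases with
  | zero => omega
  | succ j =>
    have := congrFun h j
    simp only [succSubZero_apply] at this
    omega

theorem addConGen_diagonalShift_eq_ker :
    addConGen (diagonalShift (Fin (n + 1))) = AddCon.ker (succSubZero n) := by
  apply le_antisymm
  · refine AddCon.addConGen_le.mpr ?_
    rintro a b ⟨k, rfl⟩
    refine (AddCon.ker_rel _).mpr (funext fun j => ?_)
    simp only [succSubZero_apply]
    push_cast
    ring
  · intro a b hab
    have hshift := add_const_eq_of_succSubZero_eq ((AddCon.ker_rel _).mp hab)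
    have ha : addConGen (diagonalShift _) (fun i => b 0 + a i) a :=
      AddConGen.Rel.of _ _ ⟨b 0, rfl⟩
    have hb : addConGen (diagonalShift _) (fun i => a 0 + b i) b :=
      AddConGen.Rel.of _ _ ⟨a 0, rfl⟩
    rw [hshift] at ha
    exact ha.symm.trans hb

theorem nonempty_addConGen_diagonalShift_quotient_addEquiv :
    Nonempty ((addConGen (diagonalShift (Fin (n + 1)))).Quotient ≃+ (Fin n → ℤ)) := by
  rw [addConGen_diagonalShift_eq_ker]
  exact ⟨AddCon.quotientKerEquivOfSurjective _ succSubZero_surjective⟩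

end Cokernel

/-- For every `m ≥ 1`, the diagonal map `Δ : ℕ → ℕ^m` is free with basis
`S = {s ∈ ℕ^m : s i = 0 for some i}` (i.e. `(q, s) ↦ Δ(q) + s` is a bijection `ℕ × S → ℕ^m`),
and `Δ` is vertical with cokernel `ℤ^{m-1}`: the cokernel monoid `ℕ^m / Δ(ℕ)` — the quotient of
`ℕ^m` by the congruence generated by `Δ(n) + x ∼ x` — is a group isomorphic to `ℤ^{m-1}`. -/
theorem stmt10 (m : ℕ) (hm : 1 ≤ m) :
    Function.Bijective
      (fun x : ℕ × {s : Fin m → ℕ // ∃ i, s i = 0} =>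
        (fun i => x.1 + (x.2 : Fin m → ℕ) i : Fin m → ℕ)) ∧
    Nonempty
      ((addConGen fun a b : Fin m → ℕ => ∃ n : ℕ, a = fun i => n + b i).Quotient ≃+
        (Fin (m - 1) → ℤ)) := by
  obtain ⟨n, rfl⟩ : ∃ n, m = n + 1 := ⟨m - 1, by omega⟩
  exact ⟨diagonalAdd_bijective, nonempty_addConGen_diagonalShift_quotient_addEquiv⟩
end

section
/- An abelian group G admits a total ordering compatible with the group structure (a ≤ b and c ≤ d imply a+c ≤ b+d, with equality iff a=b and c=d) if and only if G is torsion-free. -/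
/-!
A compatible total order on `G` makes `n • g` lie strictly on the same side of `0` as `g` for
every `n > 0`, so `G` is torsion-free. Conversely, a torsion-free `G` embeds into its divisible
hull, a `ℚ`-vector space, and choosing a basis indexed by a well-ordered set identifies that with
`ι →₀ ℚ`; the lexicographic order there is compatible with addition, and pulls back to `G`.
-/

open Function

universe u

def IsAddCompatible {M : Type*} [Add M] (r : M → M → Prop) : Prop :=
  ∀ a b c d : M, r a b → r c d → r (a + c) (b + d) ∧ (a + c = b + d ↔ a = b ∧ c = d)

theorem isAddTorsionFree_iff_forall_nsmul_eq_zero {G : Type*} [AddCommGroup G] :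
    IsAddTorsionFree G ↔ ∀ (n : ℕ) (g : G), 0 < n → n • g = 0 → g = 0 := by
  refine ⟨fun _ n g hn hg ↦ IsAddTorsionFree.nsmul_right_injective hn.ne' ?_, fun h ↦ ?_⟩
  · simpa using hg
  · refine ⟨fun n hn a b hab ↦ sub_eq_zero.1 (h n _ (Nat.pos_of_ne_zero hn) ?_)⟩
    simp only [nsmul_sub, hab, sub_self]

theorem isAddCompatible_le {M : Type*} [AddCommMonoid M] [PartialOrder M]
    [IsOrderedCancelAddMonoid M] : IsAddCompatible (· ≤ · : M → M → Prop) :=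
  fun _ _ _ _ hab hcd ↦ ⟨add_le_add hab hcd, add_eq_add_iff_eq_and_eq hab hcd⟩

namespace IsAddCompatible

theorem comap {M N : Type*} [AddZeroClass M] [AddZeroClass N] {s : N → N → Prop}
    (hs : IsAddCompatible s) (f : M →+ N) (hf : Injective f) :
    IsAddCompatible (fun a b ↦ s (f a) (f b)) := by
  intro a b c d hab hcd
  simp only [map_add, hf.eq_iff.symm]
  exact hs _ _ _ _ hab hcd

theorem rel_zero_nsmul {M : Type*} [AddMonoid M] {r : M → M → Prop} (hr : IsAddCompatible r)
    {g : M} (hg0 : r 0 g) (hg : g ≠ 0) {n : ℕ} (hn : 0 < n) :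
    r 0 (n • g) ∧ n • g ≠ 0 := by
  induction n, hn using Nat.le_induction with
  | base => simpa using ⟨hg0, hg⟩
  | succ n _ ih =>
    obtain ⟨hle, heq⟩ := hr 0 (n • g) 0 g ih.1 hg0
    rw [add_zero, ← succ_nsmul] at hle heq
    exact ⟨hle, fun h ↦ hg (heq.1 h.symm).2.symm⟩

variable {G : Type*} [AddCommGroup G] {r : G → G → Prop}

theorem rel_zero_neg [Std.Refl r] (hr : IsAddCompatible r) {g : G} (hg : r g 0) : r 0 (-g) := by
  simpa using (hr g 0 (-g) (-g) hg (refl _)).1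

theorem isAddTorsionFree (hlin : IsLinearOrder G r) (hr : IsAddCompatible r) :
    IsAddTorsionFree G := by
  refine isAddTorsionFree_iff_forall_nsmul_eq_zero.2 fun n g hn hng ↦ by_contra fun hg ↦ ?_
  rcases total_of r 0 g with hg0 | hg0
  · exact (hr.rel_zero_nsmul hg0 hg hn).2 hng
  · refine (hr.rel_zero_nsmul (hr.rel_zero_neg hg0) (neg_ne_zero.2 hg) hn).2 ?_
    rw [smul_neg, hng, neg_zero]

end IsAddCompatible

theorem exists_injective_addMonoidHom_finsupp_rat (G : Type u) [AddCommGroup G]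
    [IsAddTorsionFree G] : ∃ (ι : Type u) (f : G →+ (ι →₀ ℚ)), Injective f :=
  let b := Module.Basis.ofVectorSpace ℚ (DivisibleHull G)
  ⟨_, b.repr.toAddMonoidHom.comp (DivisibleHull.coeAddMonoidHom G),
    b.repr.injective.comp DivisibleHull.coe_injective⟩

theorem exists_isLinearOrder_isAddCompatible (G : Type u) [AddCommGroup G] [IsAddTorsionFree G] :
    ∃ r : G → G → Prop, IsLinearOrder G r ∧ IsAddCompatible r := by
  obtain ⟨ι, f, hf⟩ := exists_injective_addMonoidHom_finsupp_rat G
  let : LinearOrder ι := IsWellOrder.linearOrder WellOrderingRel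
  let g : G →+ Lex (ι →₀ ℚ) := (toLexAddEquiv _).toAddMonoidHom.comp f
  have hg : Injective g := (toLexAddEquiv _).injective.comp hf
  exact ⟨_, (RelEmbedding.preimage ⟨g, hg⟩ (· ≤ ·)).isLinearOrder,
    isAddCompatible_le.comap g hg⟩

/-- An abelian group `G` admits a total ordering compatible with the group
structure (`a ≤ b` and `c ≤ d` imply `a + c ≤ b + d`, with equality iff `a = b` and `c = d`)
if and only if `G` is torsion-free. -/
theorem stmt11 (G : Type) [AddCommGroup G] :
    (∃ r : G → G → Prop, IsLinearOrder G r ∧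
        ∀ a b c d : G, r a b → r c d →
          r (a + c) (b + d) ∧ (a + c = b + d ↔ a = b ∧ c = d)) ↔
      ∀ (n : ℕ) (g : G), 0 < n → n • g = 0 → g = 0 := by
  rw [← isAddTorsionFree_iff_forall_nsmul_eq_zero]
  constructor
  · rintro ⟨r, hlin, hr⟩
    exact IsAddCompatible.isAddTorsionFree hlin hr
  · intro _
    exact exists_isLinearOrder_isAddCompatible G
end

section
/- Let A be a commutative ring graded by a torsion-free abelian group G, and let I ⊆ A be a homogeneous ideal. Then I is prime if and only if I is semiprime (i.e., for all a,b ∈ A with at least one homogeneous, ab ∈ I implies a ∈ I or b ∈ I). -/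
/-!
A torsion-free abelian group `G` embeds into the `ℚ`-vector space `DivisibleHull G`, hence into
`Lex (ι →₀ ℚ)` for a basis indexed by a linearly ordered `ι`; pulling back that order makes `G`
a linearly ordered cancellative monoid. For such gradings, a homogeneous ideal that is prime on
homogeneous elements is prime: compare the leading homogeneous components of `a` and `b` not in `I`.
-/

theorem IsAddTorsionFree.of_nsmul_eq_zero {G : Type*} [AddCommGroup G]
    (h : ∀ (n : ℕ) (g : G), 0 < n → n • g = 0 → g = 0) : IsAddTorsionFree G where
  nsmul_right_injective n hn a b hab :=
    sub_eq_zero.1 <| h n _ (Nat.pos_of_ne_zero hn) <| by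
      simp only at hab
      rw [nsmul_sub, hab, sub_self]

theorem IsAddTorsionFree.exists_linearOrder_isOrderedCancelAddMonoid (G : Type*)
    [AddCommGroup G] [IsAddTorsionFree G] :
    ∃ _ : LinearOrder G, IsOrderedCancelAddMonoid G := by
  classical
  let b := Module.Basis.ofVectorSpace ℚ (DivisibleHull G)
  let _ : LinearOrder (Module.Basis.ofVectorSpaceIndex ℚ (DivisibleHull G)) :=
    linearOrderOfSTO WellOrderingRel
  let f : G → Lex (_ →₀ ℚ) := fun g ↦ toLex (b.repr g)
  have hf : Function.Injective f :=
    toLex.injective.comp (b.repr.injective.comp DivisibleHull.coe_injective)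
  have hadd : ∀ x y, f (x + y) = f x + f y := fun x y ↦ by
    simp only [f, DivisibleHull.coe_add, map_add]; rfl
  let _ : LinearOrder G := LinearOrder.lift' f hf
  exact ⟨_, Function.Injective.isOrderedCancelAddMonoid f hadd Iff.rfl⟩

theorem Ideal.IsHomogeneous.isPrime_of_homogeneous_mem_or_mem_of_isAddTorsionFree
    {ι σ A : Type*} [AddCommGroup ι] [IsAddTorsionFree ι] [DecidableEq ι] [CommRing A]
    [SetLike σ A] [AddSubmonoidClass σ A] {𝒜 : ι → σ} [GradedRing 𝒜] {I : Ideal A}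
    (hI : I.IsHomogeneous 𝒜) (I_ne_top : I ≠ ⊤)
    (homogeneous_mem_or_mem : ∀ {x y : A}, SetLike.IsHomogeneousElem 𝒜 x →
      SetLike.IsHomogeneousElem 𝒜 y → x * y ∈ I → x ∈ I ∨ y ∈ I) :
    I.IsPrime := by
  obtain ⟨_, _⟩ := IsAddTorsionFree.exists_linearOrder_isOrderedCancelAddMonoid ι
  -- the grading's decomposition is stated with the given `DecidableEq ι`, not the order's
  obtain rfl : ‹DecidableEq ι› = LinearOrder.toDecidableEq := Subsingleton.elim _ _
  exact hI.isPrime_of_homogeneous_mem_or_mem I_ne_top homogeneous_mem_or_mem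

/-- Let `A` be a commutative ring graded by a torsion-free abelian group `G`
and let `I ⊆ A` be a homogeneous ideal. Then `I` is prime (`ab ∈ I` implies `a ∈ I` or `b ∈ I`
for all `a, b`) if and only if `I` is semiprime (the same conclusion whenever at least one of
`a, b` is homogeneous). -/
theorem stmt12 (G : Type) [AddCommGroup G] [DecidableEq G]
    (hG : ∀ (n : ℕ) (g : G), 0 < n → n • g = 0 → g = 0)
    (A : Type) [CommRing A] (𝒜 : G → AddSubgroup A) [GradedRing 𝒜]
    (I : Ideal A) (hI : Ideal.IsHomogeneous 𝒜 I) :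
    (∀ a b : A, a * b ∈ I → a ∈ I ∨ b ∈ I) ↔
      (∀ a b : A, (SetLike.IsHomogeneousElem 𝒜 a ∨ SetLike.IsHomogeneousElem 𝒜 b) →
        a * b ∈ I → a ∈ I ∨ b ∈ I) := by
  refine ⟨fun h a b _ ↦ h a b, fun h a b hab ↦ ?_⟩
  rcases eq_or_ne I ⊤ with rfl | I_ne_top
  · exact Or.inl Submodule.mem_top
  have := IsAddTorsionFree.of_nsmul_eq_zero hG
  exact (hI.isPrime_of_homogeneous_mem_or_mem_of_isAddTorsionFree I_ne_top
    fun hx _ hxy ↦ h _ _ (Or.inl hx) hxy).mem_or_mem hab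
end

section
/- Let P be an integral monoid and k a field. Then I ↦ k[I] is a bijection between ideals of P and homogeneous ideals of the P^gp-graded ring k[P], and it restricts to a bijection between prime ideals of P and semiprime homogeneous ideals of k[P]. If moreover P^gp is torsion-free, every semiprime homogeneous ideal of k[P] is prime. -/
/-!
Since `φ` is injective, each fibre of the grading contains a single monomial, so the homogeneous
elements of `k[P]` are the scalar multiples of monomials. A homogeneous ideal is therefore
spanned by the monomials it contains, and these form an ideal of `P`; on monomials,
`single p c * single q d = single (p * q) (c * d)` turns primality of `I` into semiprimality of
`k[I]`.

If `P^gp` is torsion-free, then so is `P`, and a cancellative torsion-free commutative monoid has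
unique products, so `k[P]` is a domain. For a prime ideal `I`, the complement of `I` is closed
under multiplication, so the map cutting an element down to its coefficients off `I` is multiplicative modulo `k[I]`:
`ab ∈ k[I]` forces `a'b' = 0` for the cut-down parts `a'`, `b'`, hence `a' = 0` or `b' = 0`.
-/

/-- An ideal of a (commutative) monoid `P`: a subset closed under the action of `P`. -/
def IsMonIdeal {P : Type} [CommMonoid P] (I : Set P) : Prop :=
  ∀ (p : P), ∀ i ∈ I, p * i ∈ I

/-- The ideal `k[I]` of the monoid algebra `k[P]` attached to an ideal `I` of `P`. -/
noncomputable def kIdeal (k : Type) [Field k] {P : Type} [CommMonoid P] (I : Set P) :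
    Ideal (MonoidAlgebra k P) :=
  Ideal.span ((fun i => MonoidAlgebra.single i (1 : k)) '' I)

/-- An element of `k[P]` is homogeneous for the `P^gp`-grading (recorded via an injective
homomorphism `φ : P → G` to an abelian group) iff its support lies in a single fiber of `φ`. -/
def IsHomogElem {P : Type} [CommMonoid P] {k : Type} [Field k] {G : Type} [CommGroup G]
    (φ : P →* G) (a : MonoidAlgebra k P) : Prop :=
  ∃ g : G, ∀ p ∈ a.coeff.support, φ p = g

/-- The degree-`g` component of an element of `k[P]` for the grading given by `φ`. -/
noncomputable def homogComponent {P : Type} [CommMonoid P] {k : Type} [Field k] {G : Type}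
    [CommGroup G] (φ : P →* G) (g : G) (a : MonoidAlgebra k P) : MonoidAlgebra k P :=
  letI := Classical.decPred fun p : P => φ p = g
  MonoidAlgebra.ofCoeff (Finsupp.filter (fun p => φ p = g) a.coeff)

/-- A homogeneous ideal of `k[P]` (for the grading given by `φ`): an ideal containing all of the
homogeneous components of each of its elements. -/
def IsHomogIdeal {P : Type} [CommMonoid P] {k : Type} [Field k] {G : Type} [CommGroup G]
    (φ : P →* G) (J : Ideal (MonoidAlgebra k P)) : Prop :=
  ∀ a ∈ J, ∀ g : G, homogComponent φ g a ∈ J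

/-- A semiprime (homogeneous) ideal: `ab ∈ J` with `a`, `b` homogeneous implies `a ∈ J` or
`b ∈ J`. -/
def IsSemiprimeIdeal {P : Type} [CommMonoid P] {k : Type} [Field k] {G : Type} [CommGroup G]
    (φ : P →* G) (J : Ideal (MonoidAlgebra k P)) : Prop :=
  ∀ a b : MonoidAlgebra k P, IsHomogElem φ a → IsHomogElem φ b → a * b ∈ J → a ∈ J ∨ b ∈ J

theorem uniqueProds_of_isMulTorsionFree (M : Type*) [CancelCommMonoid M] [IsMulTorsionFree M] :
    UniqueProds M where
  uniqueMul_of_nonempty {A B} hA hB := by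
    classical
    -- `UniqueProds N` is `AffineMonoid.to_twoUniqueProds`: a finitely generated cancellative
    -- torsion-free commutative monoid embeds into some `ℤⁿ`.
    let N := Submonoid.closure ((A ∪ B : Finset M) : Set M)
    let _ : CancelCommMonoid N := { N.toCommMonoid with
      mul_left_cancel _ _ _ h := Subtype.ext (mul_left_cancel (congrArg Subtype.val h)) }
    have _ : IsMulTorsionFree N := Subtype.val_injective.isMulTorsionFree N.subtype
    have hAN : (A.subtype (· ∈ N)).map (.subtype _) = A :=
      Finset.subtype_map_of_mem fun x hx => Submonoid.subset_closure (Finset.mem_union_left _ hx)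
    have hBN : (B.subtype (· ∈ N)).map (.subtype _) = B :=
      Finset.subtype_map_of_mem fun x hx => Submonoid.subset_closure (Finset.mem_union_right _ hx)
    obtain ⟨a, ha, b, hb, hab⟩ := UniqueProds.uniqueMul_of_nonempty
      (Finset.map_nonempty.mp (hAN ▸ hA)) (Finset.map_nonempty.mp (hBN ▸ hB))
    have hab' := (UniqueMul.mulHom_image_iff N.subtype.toMulHom Subtype.val_injective).2 hab
    refine ⟨a, hAN ▸ Finset.mem_map_of_mem _ ha, b, hBN ▸ Finset.mem_map_of_mem _ hb, ?_⟩
    rw [← hAN, ← hBN, Finset.map_eq_image, Finset.map_eq_image]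
    exact hab'

open MonoidAlgebra

section

variable {P : Type} [CommMonoid P] {k : Type} [Field k] {G : Type} [CommGroup G]

theorem IsHomogElem.eq_zero_or_eq_single {φ : P →* G} (hφ : Function.Injective φ)
    {a : MonoidAlgebra k P} (ha : IsHomogElem φ a) :
    a = 0 ∨ ∃ p c, c ≠ 0 ∧ a = single p c := by
  obtain ⟨g, hg⟩ := ha
  rcases a.coeff.support.eq_empty_or_nonempty with h | ⟨p, hp⟩
  · exact .inl (coeff_eq_zero.mp (Finsupp.support_eq_empty.mp h))
  refine .inr ⟨p, a.coeff p, Finsupp.mem_support_iff.mp hp, ext ?_⟩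
  rw [coeff_single, Finsupp.eq_single_iff]
  refine ⟨fun q hq => ?_, rfl⟩
  exact Finset.mem_singleton.mpr (hφ ((hg q hq).trans (hg p hp).symm))

theorem isHomogElem_single (φ : P →* G) (p : P) (c : k) : IsHomogElem φ (single p c) :=
  ⟨φ p, fun q hq => by rw [Finset.mem_singleton.mp (Finsupp.support_single_subset hq)]⟩

theorem homogComponent_apply_self {φ : P →* G} (hφ : Function.Injective φ)
    (a : MonoidAlgebra k P) (p : P) : homogComponent φ (φ p) a = single p (a.coeff p) := by
  classical
  ext q
  simp only [homogComponent, coeff_ofCoeff, Finsupp.filter_apply, hφ.eq_iff, coeff_single,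
    Finsupp.single_apply, eq_comm (a := p)]
  split_ifs with h <;> simp [h]

namespace IsMonIdeal

variable {I : Set P} (hI : IsMonIdeal I)
include hI

theorem mem_kIdeal_iff {a : MonoidAlgebra k P} : a ∈ kIdeal k I ↔ ∀ p ∈ a.coeff.support, p ∈ I :=
  mem_ideal_span_of_image.trans <| forall₂_congr fun p _ =>
    ⟨fun ⟨q, hq, d, hpq⟩ => hpq ▸ hI d q hq, fun hp => ⟨p, hp, 1, (one_mul p).symm⟩⟩

theorem single_mem_kIdeal_iff {p : P} {c : k} (hc : c ≠ 0) : single p c ∈ kIdeal k I ↔ p ∈ I := by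
  simp [hI.mem_kIdeal_iff, coeff_single, Finsupp.support_single p hc]

theorem isHomogIdeal_kIdeal (φ : P →* G) : IsHomogIdeal φ (kIdeal k I) := by
  classical
  intro a ha g
  rw [hI.mem_kIdeal_iff] at ha ⊢
  intro p hp
  simp only [homogComponent, coeff_ofCoeff, Finsupp.support_filter, Finset.mem_filter] at hp
  exact ha p hp.1

theorem eq_of_kIdeal_eq {I' : Set P} (hI' : IsMonIdeal I') (h : kIdeal k I = kIdeal k I') :
    I = I' :=
  Set.ext fun p => by
    rw [← hI.single_mem_kIdeal_iff (one_ne_zero (α := k)), h, hI'.single_mem_kIdeal_iff one_ne_zero]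

theorem isSemiprimeIdeal_kIdeal_iff {φ : P →* G} (hφ : Function.Injective φ) :
    (∀ p q : P, p * q ∈ I → p ∈ I ∨ q ∈ I) ↔ IsSemiprimeIdeal φ (kIdeal k I) := by
  constructor
  · intro hprime a b ha hb hab
    rcases ha.eq_zero_or_eq_single hφ with rfl | ⟨p, c, hc, rfl⟩
    · exact .inl (zero_mem _)
    rcases hb.eq_zero_or_eq_single hφ with rfl | ⟨q, d, hd, rfl⟩
    · exact .inr (zero_mem _)
    rw [single_mul_single, hI.single_mem_kIdeal_iff (mul_ne_zero hc hd)] at hab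
    rw [hI.single_mem_kIdeal_iff hc, hI.single_mem_kIdeal_iff hd]
    exact hprime p q hab
  · intro hsemi p q hpq
    have h1 : single p (1 : k) * single q 1 ∈ kIdeal k I := by
      rwa [single_mul_single, mul_one, hI.single_mem_kIdeal_iff one_ne_zero]
    simpa only [hI.single_mem_kIdeal_iff one_ne_zero] using
      hsemi _ _ (isHomogElem_single φ p 1) (isHomogElem_single φ q 1) h1

theorem mem_or_mem_of_mul_mem_kIdeal [NoZeroDivisors (MonoidAlgebra k P)]
    (hprime : ∀ p q : P, p * q ∈ I → p ∈ I ∨ q ∈ I) {a b : MonoidAlgebra k P}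
    (hab : a * b ∈ kIdeal k I) : a ∈ kIdeal k I ∨ b ∈ kIdeal k I := by
  classical
  let off (x : MonoidAlgebra k P) : MonoidAlgebra k P := ofCoeff (x.coeff.filter (· ∉ I))
  have sub_off_mem x : x - off x ∈ kIdeal k I := by
    rw [hI.mem_kIdeal_iff]
    intro p hp
    by_contra h
    simp [off, h] at hp
  have off_eq_zero_iff x : off x = 0 ↔ x ∈ kIdeal k I := by
    rw [hI.mem_kIdeal_iff, ← coeff_eq_zero, coeff_ofCoeff, Finsupp.filter_eq_zero_iff]
    simp only [Finsupp.mem_support_iff, not_imp_comm]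
  have off_mul_off : ∀ p ∈ (off a * off b).coeff.support, p ∉ I := by
    intro p hp
    obtain ⟨u, hu, v, hv, rfl⟩ := Finset.mem_mul.mp (support_coeff_mul_subset _ _ hp)
    simp only [off, Finsupp.support_filter, Finset.mem_filter] at hu hv
    exact fun huv => (hprime u v huv).elim hu.2 hv.2
  have off_mul_off_mem : off a * off b ∈ kIdeal k I := by
    have h : off a * off b = a * b - ((a - off a) * b + off a * (b - off b)) := by ring
    rw [h]
    exact sub_mem hab (add_mem (Ideal.mul_mem_right _ _ (sub_off_mem a))
      (Ideal.mul_mem_left _ _ (sub_off_mem b)))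
  have off_mul_off_eq_zero : off a * off b = 0 := by
    rw [hI.mem_kIdeal_iff] at off_mul_off_mem
    rw [← coeff_eq_zero, ← Finsupp.support_eq_empty, Finset.eq_empty_iff_forall_notMem]
    exact fun p hp => off_mul_off p hp (off_mul_off_mem p hp)
  simpa only [off_eq_zero_iff] using mul_eq_zero.mp off_mul_off_eq_zero

end IsMonIdeal

theorem IsHomogIdeal.exists_kIdeal_eq {φ : P →* G} (hφ : Function.Injective φ)
    {J : Ideal (MonoidAlgebra k P)} (hJ : IsHomogIdeal φ J) :
    ∃ I : Set P, IsMonIdeal I ∧ kIdeal k I = J := by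
  let I : Set P := {p | single p (1 : k) ∈ J}
  have hI : IsMonIdeal I := fun p i hi => by
    simpa only [I, Set.mem_ofPred_eq, single_mul_single, mul_one] using
      J.mul_mem_left (single p (1 : k)) hi
  refine ⟨I, hI, le_antisymm (Ideal.span_le.mpr ?_) fun a ha => hI.mem_kIdeal_iff.mpr ?_⟩
  · rintro _ ⟨p, hp, rfl⟩
    exact hp
  · intro p hp
    have hcomp := hJ a ha (φ p)
    rw [homogComponent_apply_self hφ] at hcomp
    have := Submodule.smul_of_tower_mem J (a.coeff p)⁻¹ hcomp
    rwa [smul_single', inv_mul_cancel₀ (Finsupp.mem_support_iff.mp hp)] at this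

end

theorem stmt13_general (P : Type) [CancelCommMonoid P] (k : Type) [Field k]
    (G : Type) [CommGroup G] (φ : P →* G) (hφ : Function.Injective φ) :
    (∀ I : Set P, IsMonIdeal I → IsHomogIdeal φ (kIdeal k I)) ∧
    (∀ I₁ I₂ : Set P, IsMonIdeal I₁ → IsMonIdeal I₂ → kIdeal k I₁ = kIdeal k I₂ → I₁ = I₂) ∧
    (∀ J : Ideal (MonoidAlgebra k P), IsHomogIdeal φ J →
      ∃ I : Set P, IsMonIdeal I ∧ kIdeal k I = J) ∧
    (∀ I : Set P, IsMonIdeal I →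
      ((∀ p q : P, p * q ∈ I → p ∈ I ∨ q ∈ I) ↔ IsSemiprimeIdeal φ (kIdeal k I))) ∧
    ((∀ (n : ℕ) (g : G), 0 < n → g ^ n = 1 → g = 1) →
      ∀ J : Ideal (MonoidAlgebra k P), IsHomogIdeal φ J → IsSemiprimeIdeal φ J →
        ∀ a b : MonoidAlgebra k P, a * b ∈ J → a ∈ J ∨ b ∈ J) := by
  refine ⟨fun I hI => hI.isHomogIdeal_kIdeal φ, fun I₁ I₂ h₁ h₂ => h₁.eq_of_kIdeal_eq h₂,
    fun J hJ => hJ.exists_kIdeal_eq hφ, fun I hI => hI.isSemiprimeIdeal_kIdeal_iff hφ, ?_⟩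
  intro htf J hJ hsemi a b hab
  have : IsMulTorsionFree G := .of_not_isOfFinOrder fun g hg hfin => by
    obtain ⟨n, hn, hgn⟩ := isOfFinOrder_iff_pow_eq_one.mp hfin
    exact hg (htf n g hn hgn)
  have : IsMulTorsionFree P := hφ.isMulTorsionFree φ
  have : UniqueProds P := uniqueProds_of_isMulTorsionFree P
  obtain ⟨I, hI, rfl⟩ := hJ.exists_kIdeal_eq hφ
  exact hI.mem_or_mem_of_mul_mem_kIdeal ((hI.isSemiprimeIdeal_kIdeal_iff hφ).mpr hsemi) hab

/-- Let `P` be an integral monoid, `k` a field, and grade `k[P]` by `P^gp`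
(realized as an abelian group `G` together with an injective homomorphism `φ : P → G` whose
image generates `G`). Then `I ↦ k[I]` is a bijection between ideals of `P` and homogeneous
ideals of `k[P]`, restricting to a bijection between prime ideals of `P` and semiprime
homogeneous ideals of `k[P]`. If moreover `P^gp` is torsion-free, every semiprime homogeneous
ideal of `k[P]` is prime. -/
theorem stmt13 (P : Type) [CancelCommMonoid P] (k : Type) [Field k]
    (G : Type) [CommGroup G] (φ : P →* G) (hφ : Function.Injective φ)
    (hgen : Subgroup.closure (Set.range φ) = ⊤) :
    (∀ I : Set P, IsMonIdeal I → IsHomogIdeal φ (kIdeal k I)) ∧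
    (∀ I₁ I₂ : Set P, IsMonIdeal I₁ → IsMonIdeal I₂ → kIdeal k I₁ = kIdeal k I₂ → I₁ = I₂) ∧
    (∀ J : Ideal (MonoidAlgebra k P), IsHomogIdeal φ J →
      ∃ I : Set P, IsMonIdeal I ∧ kIdeal k I = J) ∧
    (∀ I : Set P, IsMonIdeal I →
      ((∀ p q : P, p * q ∈ I → p ∈ I ∨ q ∈ I) ↔ IsSemiprimeIdeal φ (kIdeal k I))) ∧
    ((∀ (n : ℕ) (g : G), 0 < n → g ^ n = 1 → g = 1) →
      ∀ J : Ideal (MonoidAlgebra k P), IsHomogIdeal φ J → IsSemiprimeIdeal φ J →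
        ∀ a b : MonoidAlgebra k P, a * b ∈ J → a ∈ J ∨ b ∈ J) :=
  stmt13_general P k G φ hφ
end

section
/- Let k be a field and M a module over k[x]. Then the following are equivalent: (1) x is M-regular (multiplication by x on M is injective); (2) x is regular on the localization M_{(x)} over k[x]_{(x)}. If M is finitely generated, these are further equivalent to M being free after localizing at the prime (x). -/
/-!
Localization is exact, so `x`-regularity passes from `M` to `M_{(x)}`. Conversely, an element
killed by `x` whose image in `M_{(x)}` vanishes is also killed by some `s ∉ (x)`; since `(x)` is
maximal, `x` and `s` generate the unit ideal, so the element is zero. For the last equivalence,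
`k[x]_{(x)}` is a discrete valuation ring with uniformizer `x`, so a finitely generated module over
it is free iff it is torsion-free, and every nonzero scalar is a unit times a power of `x`.
-/

open Polynomial

theorem isSMulRegular_iff_of_isLocalizedModule_of_isMaximal_span
    {R Rₚ M Mₚ : Type*} [CommRing R] [CommRing Rₚ] [Algebra R Rₚ]
    [AddCommGroup M] [Module R M] [AddCommGroup Mₚ] [Module R Mₚ] [Module Rₚ Mₚ]
    [IsScalarTower R Rₚ Mₚ] {a : R} [(Ideal.span {a}).IsMaximal]
    [IsLocalization.AtPrime Rₚ (Ideal.span {a})]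
    (f : M →ₗ[R] Mₚ) [IsLocalizedModule (Ideal.span {a}).primeCompl f] :
    IsSMulRegular M a ↔ IsSMulRegular Mₚ (algebraMap R Rₚ a) := by
  refine ⟨fun reg ↦ reg.of_isLocalizedModule Rₚ (Ideal.span {a}).primeCompl f, fun reg ↦ ?_⟩
  rw [isSMulRegular_iff_right_eq_zero_of_smul]
  intro m ham
  have hfm : f m = f 0 := by
    refine reg.right_eq_zero_of_smul ?_ |>.trans f.map_zero.symm
    rw [algebraMap_smul, ← f.map_smul, ham, f.map_zero]
  obtain ⟨⟨s, hs⟩, hsm⟩ := IsLocalizedModule.exists_of_eq (S := (Ideal.span {a}).primeCompl) hfm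
  obtain ⟨v, i, hi, hvi⟩ := Ideal.IsMaximal.exists_inv ‹_› hs
  obtain ⟨u, rfl⟩ := Ideal.mem_span_singleton'.mp hi
  simp only [Submonoid.mk_smul, smul_zero] at hsm
  calc m = (v * s + u * a) • m := by rw [hvi, one_smul]
    _ = 0 := by rw [add_smul, mul_smul, mul_smul, ham, hsm, smul_zero, smul_zero, add_zero]

theorem IsDiscreteValuationRing.isTorsionFree_iff_isSMulRegular
    {R M : Type*} [CommRing R] [IsDomain R] [IsDiscreteValuationRing R]
    [AddCommGroup M] [Module R M] {ϖ : R} (hϖ : Irreducible ϖ) :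
    Module.IsTorsionFree R M ↔ IsSMulRegular M ϖ := by
  refine ⟨fun _ ↦ (IsRegular.of_ne_zero hϖ.ne_zero).isSMulRegular, fun reg ↦ ⟨fun r hr ↦ ?_⟩⟩
  obtain ⟨n, u, rfl⟩ := eq_unit_mul_pow_irreducible hr.ne_zero hϖ
  exact (u.isSMulRegular M).mul (reg.pow n)

theorem IsLocalization.AtPrime.irreducible_algebraMap_of_span
    {R Rₚ : Type*} [CommRing R] [CommRing Rₚ] [IsDomain Rₚ] [IsDiscreteValuationRing Rₚ]
    [Algebra R Rₚ] (a : R) [(Ideal.span {a}).IsPrime]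
    [IsLocalization.AtPrime Rₚ (Ideal.span {a})] :
    Irreducible (algebraMap R Rₚ a) := by
  rw [IsDiscreteValuationRing.irreducible_iff_uniformizer,
    ← IsLocalization.AtPrime.map_eq_maximalIdeal (Ideal.span {a}), Ideal.map_span,
    Set.image_singleton]

theorem IsDedekindDomain.free_iff_isSMulRegular_of_isLocalizedModule
    {R Rₚ M Mₚ : Type*} [CommRing R] [IsDedekindDomain R] [CommRing Rₚ] [IsDomain Rₚ]
    [Algebra R Rₚ] [AddCommGroup M] [Module R M] [Module.Finite R M]
    [AddCommGroup Mₚ] [Module R Mₚ] [Module Rₚ Mₚ] [IsScalarTower R Rₚ Mₚ]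
    {a : R} (ha : a ≠ 0) [(Ideal.span {a}).IsPrime] [IsLocalization.AtPrime Rₚ (Ideal.span {a})]
    (f : M →ₗ[R] Mₚ) [IsLocalizedModule (Ideal.span {a}).primeCompl f] :
    Module.Free Rₚ Mₚ ↔ IsSMulRegular Mₚ (algebraMap R Rₚ a) := by
  have : IsDiscreteValuationRing Rₚ :=
    IsLocalization.AtPrime.isDiscreteValuationRing_of_dedekind_domain R
      (Ideal.span_singleton_eq_bot.not.mpr ha) Rₚ
  have : Module.Finite Rₚ Mₚ := Module.Finite.of_isLocalizedModule (Ideal.span {a}).primeCompl f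
  rw [Module.free_iff_isTorsionFree, IsDiscreteValuationRing.isTorsionFree_iff_isSMulRegular
    (IsLocalization.AtPrime.irreducible_algebraMap_of_span a)]

/-- Let `k` be a field and `M` a module over `k[x]`. Then the following are
equivalent: (1) `x` is `M`-regular (multiplication by `x` on `M` is injective); (2) `x` is
regular on the localization `M_{(x)}` over `k[x]_{(x)}`. If `M` is finitely generated, these
are further equivalent to `M_{(x)}` being a free `k[x]_{(x)}`-module. -/
theorem stmt16 (k : Type) [Field k] (M : Type) [AddCommGroup M] [Module (Polynomial k) M]
    [hp : (Ideal.span {Polynomial.X} : Ideal (Polynomial k)).IsPrime] :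
    ((Function.Injective fun m : M => (Polynomial.X : Polynomial k) • m) ↔
      Function.Injective
        (fun m : LocalizedModule
            (Ideal.span {Polynomial.X} : Ideal (Polynomial k)).primeCompl M =>
          (algebraMap (Polynomial k)
              (Localization.AtPrime (Ideal.span {Polynomial.X} : Ideal (Polynomial k)))
              Polynomial.X) • m)) ∧
    (Module.Finite (Polynomial k) M →
      ((Function.Injective fun m : M => (Polynomial.X : Polynomial k) • m) ↔
        Module.Free
          (Localization.AtPrime (Ideal.span {Polynomial.X} : Ideal (Polynomial k)))
          (LocalizedModule
            (Ideal.span {Polynomial.X} : Ideal (Polynomial k)).primeCompl M))) := by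
  have : (Ideal.span {X} : Ideal k[X]).IsMaximal :=
    PrincipalIdealRing.isMaximal_of_irreducible irreducible_X
  have regular_iff := isSMulRegular_iff_of_isLocalizedModule_of_isMaximal_span (a := X)
    (Rₚ := Localization.AtPrime (Ideal.span {(X : k[X])}))
    (LocalizedModule.mkLinearMap (Ideal.span {(X : k[X])}).primeCompl M)
  refine ⟨regular_iff, fun _ ↦ regular_iff.trans ?_⟩
  exact (IsDedekindDomain.free_iff_isSMulRegular_of_isLocalizedModule X_ne_zero
    (LocalizedModule.mkLinearMap _ M)).symm
end

section
/- Let C₁ → C₀ and C₂ → C₀ be surjections of commutative rings with fibered product C = C₁ ×_{C₀} C₂. Then: (a) the natural map C₁ ⊗_C C₂ → C₀ is an isomorphism; (b) the prime spectra Spec C₁ and Spec C₂, viewed as closed subschemes of Spec C, cover Spec C (every prime ideal of C contains I₁ × 0 or 0 × I₂, where Iᵢ = ker(Cᵢ → C₀)); (c) if C₁ and C₂ are noetherian then C is noetherian. -/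
/-!
The projections `C → Cᵢ` are surjective and jointly injective: their kernels `0 × I₂` and
`I₁ × 0` meet in `0`. Hence their product is `0`, so every prime contains one of them; and `C` is
a `C`-submodule of `C₁ × C₂`, a noetherian `C`-module because `C`-submodules of `Cᵢ` are just
ideals of `Cᵢ`. As `C → C₁` is surjective, `C₁ ⊗_C C₂` is the quotient of `C₂` by the image of
`0 × I₂`, which is exactly `I₂ = ker (C₂ → C₀)`.
-/

open scoped TensorProduct

/-- The fibered product of rings `C = C₁ ×_{C₀} C₂`, as a subring of `C₁ × C₂`. -/
def fibRing (C₁ C₂ C₀ : Type) [CommRing C₁] [CommRing C₂] [CommRing C₀]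
    (f₁ : C₁ →+* C₀) (f₂ : C₂ →+* C₀) : Subring (C₁ × C₂) :=
  RingHom.eqLocus (f₁.comp (RingHom.fst C₁ C₂)) (f₂.comp (RingHom.snd C₁ C₂))

/-- The first projection `C → C₁`. -/
def fibFst (C₁ C₂ C₀ : Type) [CommRing C₁] [CommRing C₂] [CommRing C₀]
    (f₁ : C₁ →+* C₀) (f₂ : C₂ →+* C₀) : ↥(fibRing C₁ C₂ C₀ f₁ f₂) →+* C₁ :=
  (RingHom.fst C₁ C₂).comp (fibRing C₁ C₂ C₀ f₁ f₂).subtype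

/-- The second projection `C → C₂`. -/
def fibSnd (C₁ C₂ C₀ : Type) [CommRing C₁] [CommRing C₂] [CommRing C₀]
    (f₁ : C₁ →+* C₀) (f₂ : C₂ →+* C₀) : ↥(fibRing C₁ C₂ C₀ f₁ f₂) →+* C₂ :=
  (RingHom.snd C₁ C₂).comp (fibRing C₁ C₂ C₀ f₁ f₂).subtype

theorem isNoetherian_of_surjective_algebraMap {R S M : Type*} [CommRing R] [Ring S]
    [AddCommGroup M] [Algebra R S] [Module R M] [Module S M] [IsScalarTower R S M]
    (h : Function.Surjective (algebraMap R S)) [IsNoetherian S M] : IsNoetherian R M :=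
  isNoetherian_mk
    ⟨(Submodule.orderIsoOfAlgebraMapSurjective h).symm.toOrderEmbedding.dual.wellFounded
      wellFounded_lt⟩

theorem isNoetherianRing_of_injective_prod {R A B : Type*} [CommRing R] [CommRing A] [CommRing B]
    [IsNoetherianRing A] [IsNoetherianRing B] {g₁ : R →+* A} {g₂ : R →+* B}
    (hg₁ : Function.Surjective g₁) (hg₂ : Function.Surjective g₂)
    (hg : Function.Injective (g₁.prod g₂)) : IsNoetherianRing R := by
  let := g₁.toAlgebra
  let := g₂.toAlgebra
  have : IsNoetherian R A := isNoetherian_of_surjective_algebraMap hg₁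
  have : IsNoetherian R B := isNoetherian_of_surjective_algebraMap hg₂
  exact isNoetherianRing_iff.mpr <|
    isNoetherian_of_injective ((Algebra.linearMap R A).prod (Algebra.linearMap R B)) hg

theorem Ideal.IsPrime.ker_le_or_ker_le_of_injective_prod {R A B : Type*} [CommRing R]
    [Ring A] [Ring B]
    {g₁ : R →+* A} {g₂ : R →+* B} (hg : Function.Injective (g₁.prod g₂))
    {P : Ideal R} (hP : P.IsPrime) : RingHom.ker g₁ ≤ P ∨ RingHom.ker g₂ ≤ P := by
  refine hP.mul_le.mp (Ideal.mul_le_inf.trans fun x hx => ?_)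
  have : x = 0 := hg <| Prod.ext (by simpa using hx.1) (by simpa using hx.2)
  exact this ▸ P.zero_mem

theorem Algebra.TensorProduct.productMap_bijective_of_surjective_algebraMap {R A B C : Type*}
    [CommRing R] [CommRing A] [CommRing B] [CommRing C] [Algebra R A] [Algebra R B] [Algebra R C]
    (φ : A →ₐ[R] C) (ψ : B →ₐ[R] C) (hA : Function.Surjective (algebraMap R A))
    (hψ : Function.Surjective ψ)
    (hker : ∀ y, ψ y = 0 → ∃ c : R, algebraMap R A c = 0 ∧ algebraMap R B c = y) :
    Function.Bijective (productMap φ ψ) := by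
  have hright : Function.Surjective (includeRight : B →ₐ[R] A ⊗[R] B) :=
    includeRight_surjective B hA
  refine ⟨(injective_iff_map_eq_zero _).mpr fun z hz => ?_, fun x => ?_⟩
  · obtain ⟨y, rfl⟩ := hright z
    obtain ⟨c, hcA, rfl⟩ := hker y (by simpa using hz)
    rw [includeRight.commutes, ← (includeLeft (S := R)).commutes, hcA, map_zero]
  · obtain ⟨y, rfl⟩ := hψ x
    exact ⟨includeRight y, by simp⟩

section FiberedProduct

variable {C₁ C₂ C₀ : Type} [CommRing C₁] [CommRing C₂] [CommRing C₀]
  {f₁ : C₁ →+* C₀} {f₂ : C₂ →+* C₀}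

theorem fibFst_surjective (h₂ : Function.Surjective f₂) :
    Function.Surjective (fibFst C₁ C₂ C₀ f₁ f₂) := fun x =>
  let ⟨y, hy⟩ := h₂ (f₁ x)
  ⟨⟨(x, y), hy.symm⟩, rfl⟩

theorem fibSnd_surjective (h₁ : Function.Surjective f₁) :
    Function.Surjective (fibSnd C₁ C₂ C₀ f₁ f₂) := fun y =>
  let ⟨x, hx⟩ := h₁ (f₂ y)
  ⟨⟨(x, y), hx⟩, rfl⟩

theorem fibFst_prod_fibSnd_injective :
    Function.Injective ((fibFst C₁ C₂ C₀ f₁ f₂).prod (fibSnd C₁ C₂ C₀ f₁ f₂)) :=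
  Subtype.val_injective

end FiberedProduct

/-- Let `C₁ → C₀` and `C₂ → C₀` be surjections of commutative rings with
fibered product `C = C₁ ×_{C₀} C₂`. Then: (a) the natural map `C₁ ⊗_C C₂ → C₀` is an
isomorphism; (b) `Spec C₁` and `Spec C₂` cover `Spec C`: every prime ideal of `C` contains
`I₁ × 0 = ker (C → C₂)` or `0 × I₂ = ker (C → C₁)`; (c) if `C₁` and `C₂` are noetherian then
`C` is noetherian. -/
theorem stmt17 (C₁ C₂ C₀ : Type) [CommRing C₁] [CommRing C₂] [CommRing C₀]
    (f₁ : C₁ →+* C₀) (f₂ : C₂ →+* C₀)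
    (h₁ : Function.Surjective f₁) (h₂ : Function.Surjective f₂) :
    letI : Algebra ↥(fibRing C₁ C₂ C₀ f₁ f₂) C₁ := (fibFst C₁ C₂ C₀ f₁ f₂).toAlgebra
    letI : Algebra ↥(fibRing C₁ C₂ C₀ f₁ f₂) C₂ := (fibSnd C₁ C₂ C₀ f₁ f₂).toAlgebra
    letI : Algebra ↥(fibRing C₁ C₂ C₀ f₁ f₂) C₀ :=
      (f₁.comp (fibFst C₁ C₂ C₀ f₁ f₂)).toAlgebra
    (Function.Bijective
      (Algebra.TensorProduct.productMap
        (⟨f₁, fun _ => rfl⟩ : C₁ →ₐ[↥(fibRing C₁ C₂ C₀ f₁ f₂)] C₀)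
        (⟨f₂, fun c => Eq.symm c.2⟩ : C₂ →ₐ[↥(fibRing C₁ C₂ C₀ f₁ f₂)] C₀))) ∧
    (∀ P : Ideal ↥(fibRing C₁ C₂ C₀ f₁ f₂), P.IsPrime →
      RingHom.ker (fibSnd C₁ C₂ C₀ f₁ f₂) ≤ P ∨ RingHom.ker (fibFst C₁ C₂ C₀ f₁ f₂) ≤ P) ∧
    (IsNoetherianRing C₁ → IsNoetherianRing C₂ →
      IsNoetherianRing ↥(fibRing C₁ C₂ C₀ f₁ f₂)) := by
  refine ⟨?_, fun P hP => ?_, fun _ _ => ?_⟩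
  · let _ := (fibFst C₁ C₂ C₀ f₁ f₂).toAlgebra
    let _ := (fibSnd C₁ C₂ C₀ f₁ f₂).toAlgebra
    let _ := (f₁.comp (fibFst C₁ C₂ C₀ f₁ f₂)).toAlgebra
    exact Algebra.TensorProduct.productMap_bijective_of_surjective_algebraMap _ _
      (fibFst_surjective h₂) h₂ fun y hy =>
        ⟨⟨(0, y), (map_zero f₁).trans hy.symm⟩, rfl, rfl⟩
  · exact Or.symm <| hP.ker_le_or_ker_le_of_injective_prod
      (fibFst_prod_fibSnd_injective (f₁ := f₁) (f₂ := f₂))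
  · exact isNoetherianRing_of_injective_prod (fibFst_surjective h₂) (fibSnd_surjective h₁)
      fibFst_prod_fibSnd_injective
end

section
/- Let C₁ → C₀ and C₂ → C₀ be surjections of A-algebras with fibered product C = C₁ ×_{C₀} C₂. If C₁ and C₂ are of finite type over A and at least one of the kernels ker(Cᵢ → C₀) is a finitely generated ideal, then C is of finite type over A. -/
/-! Lift finite generating sets of `C₁` and `C₂` to the fibered product `C` (both projections
of `C` are onto, by surjectivity of `f₂` resp. `f₁`) and add the elements `(0, t)` for finitely
many generators `t` of `ker f₂`. The subalgebra `B` they generate maps onto `C₁`, so each element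
of `C` differs from one of `B` by some `(0, k)` with `k ∈ ker f₂`. As `B` also maps onto `C₂`,
the `k` with `(0, k) ∈ B` form an ideal of `C₂`, which contains the generators of `ker f₂`. The
case of finitely generated `ker f₁` reduces to this one by swapping the factors. -/

namespace Subalgebra

variable {A R S : Type*} [CommRing A] [CommRing R] [CommRing S] [Algebra A R] [Algebra A S]

theorem le_of_le_of_map_le_of_ker {B E : Subalgebra A R} (g : R →ₐ[A] S) (hBE : B ≤ E)
    (hmap : E.map g ≤ B.map g) (hker : ∀ x ∈ E, g x = 0 → x ∈ B) : E ≤ B := by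
  intro x hx
  obtain ⟨b, hb, hbx⟩ := hmap ⟨x, hx, rfl⟩
  have hdiff : x - b ∈ B :=
    hker _ (E.sub_mem hx (hBE hb)) (by rw [map_sub, sub_eq_zero]; exact hbx.symm)
  simpa using B.add_mem hdiff hb

theorem exists_finset_subset_map_adjoin_eq_top (E : Subalgebra A R) (g : R →ₐ[A] S)
    (hE : E.map g = ⊤) [Algebra.FiniteType A S] :
    ∃ G : Finset R, (G : Set R) ⊆ E ∧ (Algebra.adjoin A (G : Set R)).map g = ⊤ := by
  classical
  obtain ⟨s, hs⟩ := Algebra.FiniteType.out (R := A) (A := S)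
  choose lift hlift hglift using fun y : S => (hE ▸ Algebra.mem_top : y ∈ E.map g)
  refine ⟨s.image lift, by simpa [Set.subset_def] using fun y _ => hlift y, ?_⟩
  have hsection : g ∘ lift = id := funext hglift
  rw [AlgHom.map_adjoin, Finset.coe_image, ← Set.image_comp, hsection, Set.image_id, hs]

theorem zero_mk_mem_of_mem_span {B : Subalgebra A (R × S)}
    (hB : B.map (AlgHom.snd A R S) = ⊤) {T : Set S} (hT : ∀ t ∈ T, ((0 : R), t) ∈ B)
    {k : S} (hk : k ∈ Ideal.span T) : ((0 : R), k) ∈ B := by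
  induction hk using Submodule.span_induction with
  | mem t ht => exact hT t ht
  | zero => exact B.zero_mem
  | add a b _ _ ha hb => simpa using B.add_mem ha hb
  | smul c a _ ha =>
    obtain ⟨q, hq, rfl⟩ : c ∈ B.map (AlgHom.snd A R S) := hB ▸ Algebra.mem_top
    have hmul : q * ((0 : R), a) = ((0 : R), q.2 • a) := by ext <;> simp
    exact hmul ▸ B.mul_mem hq ha

end Subalgebra

namespace AlgHom

variable {A C₁ C₂ C₀ : Type*} [CommRing A] [CommRing C₁] [CommRing C₂] [CommRing C₀]
    [Algebra A C₁] [Algebra A C₂] [Algebra A C₀]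

theorem map_fst_equalizer_eq_top (f₁ : C₁ →ₐ[A] C₀) (f₂ : C₂ →ₐ[A] C₀)
    (h₂ : Function.Surjective f₂) :
    (equalizer (f₁.comp (fst A C₁ C₂)) (f₂.comp (snd A C₁ C₂))).map (fst A C₁ C₂) = ⊤ := by
  refine eq_top_iff.2 fun x _ => ?_
  obtain ⟨y, hy⟩ := h₂ (f₁ x)
  exact ⟨(x, y), hy.symm, rfl⟩

theorem map_snd_equalizer_eq_top (f₁ : C₁ →ₐ[A] C₀) (f₂ : C₂ →ₐ[A] C₀)
    (h₁ : Function.Surjective f₁) :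
    (equalizer (f₁.comp (fst A C₁ C₂)) (f₂.comp (snd A C₁ C₂))).map (snd A C₁ C₂) = ⊤ := by
  refine eq_top_iff.2 fun y _ => ?_
  obtain ⟨x, hx⟩ := h₁ (f₂ y)
  exact ⟨(x, y), hx, rfl⟩

theorem equalizer_fst_snd_eq_map_swap (f₁ : C₁ →ₐ[A] C₀) (f₂ : C₂ →ₐ[A] C₀) :
    equalizer (f₁.comp (fst A C₁ C₂)) (f₂.comp (snd A C₁ C₂)) =
      (equalizer (f₂.comp (fst A C₂ C₁)) (f₁.comp (snd A C₂ C₁))).map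
        ((snd A C₂ C₁).prod (fst A C₂ C₁)) := by
  ext ⟨x, y⟩
  constructor
  · intro h
    exact ⟨(y, x), h.symm, rfl⟩
  · rintro ⟨⟨y', x'⟩, h, hswap⟩
    obtain ⟨rfl, rfl⟩ := Prod.mk.inj hswap
    exact h.symm

theorem fg_equalizer_of_fg_ker_right (f₁ : C₁ →ₐ[A] C₀) (f₂ : C₂ →ₐ[A] C₀)
    (h₁ : Function.Surjective f₁) (h₂ : Function.Surjective f₂)
    [Algebra.FiniteType A C₁] [Algebra.FiniteType A C₂] (hker : (RingHom.ker f₂).FG) :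
    (equalizer (f₁.comp (fst A C₁ C₂)) (f₂.comp (snd A C₁ C₂))).FG := by
  classical
  set E := equalizer (f₁.comp (fst A C₁ C₂)) (f₂.comp (snd A C₁ C₂))
  obtain ⟨T, hT⟩ := hker
  obtain ⟨G₁, hG₁E, hG₁⟩ :=
    E.exists_finset_subset_map_adjoin_eq_top _ (map_fst_equalizer_eq_top f₁ f₂ h₂)
  obtain ⟨G₂, hG₂E, hG₂⟩ :=
    E.exists_finset_subset_map_adjoin_eq_top _ (map_snd_equalizer_eq_top f₁ f₂ h₁)
  have hTker : ∀ t ∈ T, f₂ t = 0 := fun t ht =>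
    RingHom.mem_ker.1 (hT ▸ Ideal.subset_span ht)
  set G := G₁ ∪ G₂ ∪ T.image fun t => ((0 : C₁), t)
  have hGE : (G : Set (C₁ × C₂)) ⊆ E := by
    simp only [G, Finset.coe_union, Finset.coe_image, Set.union_subset_iff, Set.image_subset_iff]
    refine ⟨⟨hG₁E, hG₂E⟩, fun t ht => ?_⟩
    simp [E, hTker t ht]
  set B := Algebra.adjoin A (G : Set (C₁ × C₂))
  have hBE : B ≤ E := Algebra.adjoin_le hGE
  have hG₁G : G₁ ⊆ G := Finset.subset_union_left.trans Finset.subset_union_left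
  have hG₂G : G₂ ⊆ G := Finset.subset_union_right.trans Finset.subset_union_left
  have hB_fst : B.map (fst A C₁ C₂) = ⊤ := top_le_iff.1 <|
    hG₁ ▸ Subalgebra.map_mono (Algebra.adjoin_mono (Finset.coe_subset.2 hG₁G))
  have hB_snd : B.map (snd A C₁ C₂) = ⊤ := top_le_iff.1 <|
    hG₂ ▸ Subalgebra.map_mono (Algebra.adjoin_mono (Finset.coe_subset.2 hG₂G))
  refine ⟨G, le_antisymm hBE <| Subalgebra.le_of_le_of_map_le_of_ker (fst A C₁ C₂) hBE
    (hB_fst ▸ le_top) fun x hxE hx0 => ?_⟩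
  obtain ⟨x₁, x₂⟩ := x
  obtain rfl : x₁ = 0 := hx0
  have hx₂ : x₂ ∈ Ideal.span (T : Set C₂) := by
    rw [hT, RingHom.mem_ker]
    simpa [E, mem_equalizer] using hxE.symm
  exact Subalgebra.zero_mk_mem_of_mem_span hB_snd (fun t ht => Algebra.subset_adjoin
    (Finset.mem_union_right _ (Finset.mem_image_of_mem _ ht))) hx₂

end AlgHom

/-- Let `C₁ → C₀` and `C₂ → C₀` be surjections of `A`-algebras with fibered
product `C = C₁ ×_{C₀} C₂` (the equalizer of the two induced maps `C₁ × C₂ → C₀`). If `C₁` and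
`C₂` are of finite type over `A` and at least one of the kernels `ker (Cᵢ → C₀)` is a finitely
generated ideal, then `C` is of finite type over `A`. -/
theorem stmt18 (A C₁ C₂ C₀ : Type) [CommRing A] [CommRing C₁] [CommRing C₂] [CommRing C₀]
    [Algebra A C₁] [Algebra A C₂] [Algebra A C₀]
    (f₁ : C₁ →ₐ[A] C₀) (f₂ : C₂ →ₐ[A] C₀)
    (h₁ : Function.Surjective f₁) (h₂ : Function.Surjective f₂)
    (hft₁ : Algebra.FiniteType A C₁) (hft₂ : Algebra.FiniteType A C₂)
    (hker : (RingHom.ker f₁.toRingHom).FG ∨ (RingHom.ker f₂.toRingHom).FG) :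
    Algebra.FiniteType A
      ↥(AlgHom.equalizer (f₁.comp (AlgHom.fst A C₁ C₂)) (f₂.comp (AlgHom.snd A C₁ C₂))) := by
  rw [← Subalgebra.fg_iff_finiteType]
  rcases hker with hker₁ | hker₂
  · rw [AlgHom.equalizer_fst_snd_eq_map_swap]
    exact (AlgHom.fg_equalizer_of_fg_ker_right f₂ f₁ h₂ h₁ hker₁).map _
  · exact AlgHom.fg_equalizer_of_fg_ker_right f₁ f₂ h₁ h₂ hker₂
end

section
/- Let C₁ → C₀ ← C₂ be ring surjections with fibered product C = C₁ ×_{C₀} C₂, with ideals I₁ = ker(C → C₂) and I₂ = ker(C → C₁). Suppose M₁ is a C₁-module and M₂ is a C₂-module with a given C₀-module isomorphism φ : M₁/I₁'M₁ ≅ M₂/I₂'M₂ (where Iᵢ' = ker(Cᵢ → C₀)), and let D(M₁,M₂) = M₁ ×_{M₀} M₂ be the fibered product C-module. Then the natural maps induce a C₁-module isomorphism D(M₁,M₂)/(0×I₂)·D(M₁,M₂) ≅ M₁, and similarly D(M₁,M₂)/(I₁×0)·D(M₁,M₂) ≅ M₂. -/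
section

variable (C₁ C₂ C₀ : Type) [CommRing C₁] [CommRing C₂] [CommRing C₀]
  (f₁ : C₁ →+* C₀) (f₂ : C₂ →+* C₀)
  (M₁ M₂ : Type) [AddCommGroup M₁] [AddCommGroup M₂] [Module C₁ M₁] [Module C₂ M₂]

/-- The quotient `M₁ / I₁'M₁`, where `I₁' = ker (C₁ → C₀)`. -/
abbrev quotMod₁ : Type := M₁ ⧸ ((RingHom.ker f₁) • (⊤ : Submodule C₁ M₁))

/-- The quotient `M₂ / I₂'M₂`, where `I₂' = ker (C₂ → C₀)`. -/
abbrev quotMod₂ : Type := M₂ ⧸ ((RingHom.ker f₂) • (⊤ : Submodule C₂ M₂))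

/-- `M₁` as a module over the fibered product `C`. -/
def modC₁ : Module ↥(fibRing C₁ C₂ C₀ f₁ f₂) M₁ :=
  Module.compHom M₁ (fibFst C₁ C₂ C₀ f₁ f₂)

/-- `M₂` as a module over the fibered product `C`. -/
def modC₂ : Module ↥(fibRing C₁ C₂ C₀ f₁ f₂) M₂ :=
  Module.compHom M₂ (fibSnd C₁ C₂ C₀ f₁ f₂)

/-- `M₁ × M₂` as a module over the fibered product `C`. -/
def modProd : Module ↥(fibRing C₁ C₂ C₀ f₁ f₂) (M₁ × M₂) := by
  letI := modC₁ C₁ C₂ C₀ f₁ f₂ M₁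
  letI := modC₂ C₁ C₂ C₀ f₁ f₂ M₂
  infer_instance

/-- The fibered product module `D(M₁, M₂) = M₁ ×_{M₀} M₂`, a `C`-submodule of `M₁ × M₂`,
where the two maps to `M₀` are the natural projection `M₂ → M₂/I₂'M₂` and the natural
projection `M₁ → M₁/I₁'M₁` followed by the clutching isomorphism `φ`. -/
def fibD (φ : quotMod₁ C₁ C₀ f₁ M₁ ≃+ quotMod₂ C₂ C₀ f₂ M₂)
    (hφ : ∀ (c₁ : C₁) (c₂ : C₂), f₁ c₁ = f₂ c₂ →
      ∀ n : quotMod₁ C₁ C₀ f₁ M₁, φ (c₁ • n) = c₂ • φ n) :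
    @Submodule ↥(fibRing C₁ C₂ C₀ f₁ f₂) (M₁ × M₂) _ _ (modProd C₁ C₂ C₀ f₁ f₂ M₁ M₂) := by
  letI := modC₁ C₁ C₂ C₀ f₁ f₂ M₁
  letI := modC₂ C₁ C₂ C₀ f₁ f₂ M₂
  letI := modProd C₁ C₂ C₀ f₁ f₂ M₁ M₂
  refine
    { carrier := {mm : M₁ × M₂ |
        φ (((RingHom.ker f₁) • (⊤ : Submodule C₁ M₁)).mkQ mm.1) =
          ((RingHom.ker f₂) • (⊤ : Submodule C₂ M₂)).mkQ mm.2}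
      add_mem' := ?_
      zero_mem' := ?_
      smul_mem' := ?_ }
  · intro a b ha hb
    simp only [Set.mem_setOf_eq, Prod.fst_add, Prod.snd_add, map_add] at *
    rw [ha, hb]
  · simp only [Set.mem_setOf_eq, Prod.fst_zero, Prod.snd_zero, map_zero]
  · intro c mm hmm
    simp only [Set.mem_setOf_eq] at hmm ⊢
    show φ (((RingHom.ker f₁) • (⊤ : Submodule C₁ M₁)).mkQ
        ((fibFst C₁ C₂ C₀ f₁ f₂ c) • mm.1)) =
      ((RingHom.ker f₂) • (⊤ : Submodule C₂ M₂)).mkQ ((fibSnd C₁ C₂ C₀ f₁ f₂ c) • mm.2)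
    rw [LinearMap.map_smul, LinearMap.map_smul,
      hφ ((fibFst C₁ C₂ C₀ f₁ f₂) c) ((fibSnd C₁ C₂ C₀ f₁ f₂) c) c.2
        (((RingHom.ker f₁) • (⊤ : Submodule C₁ M₁)).mkQ mm.1), hmm]

end

/-! An element of `M₁` lifts to `D` because `M₂ → M₀` is onto. An element of `D` with first
coordinate `0` is `(0, m)` with `m ∈ I₂'M₂`; for `c ∈ I₂'` and a lift `(m', n) ∈ D` of `n ∈ M₂`
one has `(0, c • n) = (0, c) • (m', n)` with `(0, c) ∈ ker (C → C₁)`, so `(0, m) ∈ ker (C → C₁) • D`.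
The same argument with the roles exchanged handles `D → M₂`. -/

section

variable {C₁ C₂ C₀ : Type} [CommRing C₁] [CommRing C₂] [CommRing C₀]
  {f₁ : C₁ →+* C₀} {f₂ : C₂ →+* C₀}
  {M₁ M₂ : Type} [AddCommGroup M₁] [AddCommGroup M₂] [Module C₁ M₁] [Module C₂ M₂]

attribute [local instance] modC₁ modC₂

local notation "𝒞" => fibRing C₁ C₂ C₀ f₁ f₂

namespace fibRing

theorem zero_mk_mem {c : C₂} (hc : c ∈ RingHom.ker f₂) : ((0 : C₁), c) ∈ 𝒞 :=
  (map_zero f₁).trans (RingHom.mem_ker.1 hc).symm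

theorem mk_zero_mem {c : C₁} (hc : c ∈ RingHom.ker f₁) : (c, (0 : C₂)) ∈ 𝒞 :=
  (RingHom.mem_ker.1 hc).trans (map_zero f₂).symm

theorem ker_fibFst_smul_le (N : Submodule 𝒞 (M₁ × M₂)) :
    RingHom.ker (fibFst C₁ C₂ C₀ f₁ f₂) • N ≤ LinearMap.ker (LinearMap.fst 𝒞 M₁ M₂) :=
  Submodule.smul_le.2 fun c hc x _ ↦
    show fibFst C₁ C₂ C₀ f₁ f₂ c • x.1 = 0 by rw [RingHom.mem_ker.1 hc, zero_smul]

theorem ker_fibSnd_smul_le (N : Submodule 𝒞 (M₁ × M₂)) :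
    RingHom.ker (fibSnd C₁ C₂ C₀ f₁ f₂) • N ≤ LinearMap.ker (LinearMap.snd 𝒞 M₁ M₂) :=
  Submodule.smul_le.2 fun c hc x _ ↦
    show fibSnd C₁ C₂ C₀ f₁ f₂ c • x.2 = 0 by rw [RingHom.mem_ker.1 hc, zero_smul]

theorem zero_mk_mem_ker_fibFst_smul {N : Submodule 𝒞 (M₁ × M₂)}
    (hN : ∀ m₂ : M₂, ∃ m₁ : M₁, (m₁, m₂) ∈ N) {m₂ : M₂}
    (hm₂ : m₂ ∈ RingHom.ker f₂ • (⊤ : Submodule C₂ M₂)) :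
    ((0 : M₁), m₂) ∈ RingHom.ker (fibFst C₁ C₂ C₀ f₁ f₂) • N := by
  refine Submodule.smul_induction_on hm₂ (fun c hc n _ ↦ ?_) fun a b ha hb ↦ ?_
  · obtain ⟨m₁, hm₁⟩ := hN n
    let c' : 𝒞 := ⟨(0, c), zero_mk_mem hc⟩
    have hc' : c' ∈ RingHom.ker (fibFst C₁ C₂ C₀ f₁ f₂) := RingHom.mem_ker.2 rfl
    have hsmul : c' • (m₁, n) = ((0 : M₁), c • n) := Prod.ext (zero_smul C₁ m₁) rfl
    exact hsmul ▸ Submodule.smul_mem_smul hc' hm₁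
  · simpa only [Prod.mk_add_mk, add_zero] using add_mem ha hb

theorem mk_zero_mem_ker_fibSnd_smul {N : Submodule 𝒞 (M₁ × M₂)}
    (hN : ∀ m₁ : M₁, ∃ m₂ : M₂, (m₁, m₂) ∈ N) {m₁ : M₁}
    (hm₁ : m₁ ∈ RingHom.ker f₁ • (⊤ : Submodule C₁ M₁)) :
    (m₁, (0 : M₂)) ∈ RingHom.ker (fibSnd C₁ C₂ C₀ f₁ f₂) • N := by
  refine Submodule.smul_induction_on hm₁ (fun c hc n _ ↦ ?_) fun a b ha hb ↦ ?_
  · obtain ⟨m₂, hm₂⟩ := hN n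
    let c' : 𝒞 := ⟨(c, 0), mk_zero_mem hc⟩
    have hc' : c' ∈ RingHom.ker (fibSnd C₁ C₂ C₀ f₁ f₂) := RingHom.mem_ker.2 rfl
    have hsmul : c' • (n, m₂) = (c • n, (0 : M₂)) := Prod.ext rfl (zero_smul C₂ m₂)
    exact hsmul ▸ Submodule.smul_mem_smul hc' hm₂
  · simpa only [Prod.mk_add_mk, add_zero] using add_mem ha hb

theorem inf_ker_fst_eq_ker_fibFst_smul {N : Submodule 𝒞 (M₁ × M₂)}
    (hN : ∀ m₂ : M₂, ∃ m₁ : M₁, (m₁, m₂) ∈ N)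
    (hN₀ : ∀ m₂ : M₂, ((0 : M₁), m₂) ∈ N → m₂ ∈ RingHom.ker f₂ • (⊤ : Submodule C₂ M₂)) :
    N ⊓ LinearMap.ker (LinearMap.fst 𝒞 M₁ M₂) = RingHom.ker (fibFst C₁ C₂ C₀ f₁ f₂) • N := by
  refine le_antisymm ?_ (le_inf Submodule.smul_le_right (ker_fibFst_smul_le N))
  rintro ⟨x₁, x₂⟩ ⟨hx, rfl : x₁ = 0⟩
  exact zero_mk_mem_ker_fibFst_smul hN (hN₀ x₂ hx)

theorem inf_ker_snd_eq_ker_fibSnd_smul {N : Submodule 𝒞 (M₁ × M₂)}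
    (hN : ∀ m₁ : M₁, ∃ m₂ : M₂, (m₁, m₂) ∈ N)
    (hN₀ : ∀ m₁ : M₁, (m₁, (0 : M₂)) ∈ N → m₁ ∈ RingHom.ker f₁ • (⊤ : Submodule C₁ M₁)) :
    N ⊓ LinearMap.ker (LinearMap.snd 𝒞 M₁ M₂) = RingHom.ker (fibSnd C₁ C₂ C₀ f₁ f₂) • N := by
  refine le_antisymm ?_ (le_inf Submodule.smul_le_right (ker_fibSnd_smul_le N))
  rintro ⟨x₁, x₂⟩ ⟨hx, rfl : x₂ = 0⟩
  exact mk_zero_mem_ker_fibSnd_smul hN (hN₀ x₁ hx)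

end fibRing

namespace fibD

variable {φ : quotMod₁ C₁ C₀ f₁ M₁ ≃+ quotMod₂ C₂ C₀ f₂ M₂}
  {hφ : ∀ (c₁ : C₁) (c₂ : C₂), f₁ c₁ = f₂ c₂ →
      ∀ n : quotMod₁ C₁ C₀ f₁ M₁, φ (c₁ • n) = c₂ • φ n}

local notation "D" => fibD C₁ C₂ C₀ f₁ f₂ M₁ M₂ φ hφ

theorem mk_mem_iff {m₁ : M₁} {m₂ : M₂} :
    (m₁, m₂) ∈ D ↔ φ (Submodule.Quotient.mk m₁) = Submodule.Quotient.mk m₂ :=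
  Iff.rfl

theorem exists_mk_mem_of_fst (m₁ : M₁) : ∃ m₂ : M₂, (m₁, m₂) ∈ D := by
  obtain ⟨m₂, hm₂⟩ := Submodule.Quotient.mk_surjective _ (φ (Submodule.Quotient.mk m₁))
  exact ⟨m₂, hm₂.symm⟩

theorem exists_mk_mem_of_snd (m₂ : M₂) : ∃ m₁ : M₁, (m₁, m₂) ∈ D := by
  obtain ⟨m₁, hm₁⟩ := Submodule.Quotient.mk_surjective _ (φ.symm (Submodule.Quotient.mk m₂))
  exact ⟨m₁, by rw [mk_mem_iff, hm₁, φ.apply_symm_apply]⟩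

theorem map_fst_eq_top : Submodule.map (LinearMap.fst 𝒞 M₁ M₂) D = ⊤ :=
  Submodule.eq_top_iff'.2 fun m₁ ↦
    let ⟨m₂, hm⟩ := exists_mk_mem_of_fst m₁
    ⟨(m₁, m₂), hm, rfl⟩

theorem map_snd_eq_top : Submodule.map (LinearMap.snd 𝒞 M₁ M₂) D = ⊤ :=
  Submodule.eq_top_iff'.2 fun m₂ ↦
    let ⟨m₁, hm⟩ := exists_mk_mem_of_snd m₂
    ⟨(m₁, m₂), hm, rfl⟩

theorem zero_mk_mem_iff {m₂ : M₂} :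
    ((0 : M₁), m₂) ∈ D ↔ m₂ ∈ RingHom.ker f₂ • (⊤ : Submodule C₂ M₂) := by
  rw [mk_mem_iff, Submodule.Quotient.mk_zero, map_zero, eq_comm, Submodule.Quotient.mk_eq_zero]

theorem mk_zero_mem_iff {m₁ : M₁} :
    (m₁, (0 : M₂)) ∈ D ↔ m₁ ∈ RingHom.ker f₁ • (⊤ : Submodule C₁ M₁) := by
  rw [mk_mem_iff, Submodule.Quotient.mk_zero, AddEquivClass.map_eq_zero_iff,
    Submodule.Quotient.mk_eq_zero]

theorem inf_ker_fst_eq_ker_fibFst_smul : D ⊓ LinearMap.ker (LinearMap.fst 𝒞 M₁ M₂) =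
    RingHom.ker (fibFst C₁ C₂ C₀ f₁ f₂) • D :=
  fibRing.inf_ker_fst_eq_ker_fibFst_smul exists_mk_mem_of_snd fun _ ↦ zero_mk_mem_iff.1

theorem inf_ker_snd_eq_ker_fibSnd_smul : D ⊓ LinearMap.ker (LinearMap.snd 𝒞 M₁ M₂) =
    RingHom.ker (fibSnd C₁ C₂ C₀ f₁ f₂) • D :=
  fibRing.inf_ker_snd_eq_ker_fibSnd_smul exists_mk_mem_of_fst fun _ ↦ mk_zero_mem_iff.1

end fibD

end

theorem stmt19_general (C₁ C₂ C₀ : Type) [CommRing C₁] [CommRing C₂] [CommRing C₀]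
    (f₁ : C₁ →+* C₀) (f₂ : C₂ →+* C₀)
    (M₁ M₂ : Type) [AddCommGroup M₁] [AddCommGroup M₂] [Module C₁ M₁] [Module C₂ M₂]
    (φ : quotMod₁ C₁ C₀ f₁ M₁ ≃+ quotMod₂ C₂ C₀ f₂ M₂)
    (hφ : ∀ (c₁ : C₁) (c₂ : C₂), f₁ c₁ = f₂ c₂ →
      ∀ n : quotMod₁ C₁ C₀ f₁ M₁, φ (c₁ • n) = c₂ • φ n) :
    letI := modC₁ C₁ C₂ C₀ f₁ f₂ M₁
    letI := modC₂ C₁ C₂ C₀ f₁ f₂ M₂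
    letI : Module ↥(fibRing C₁ C₂ C₀ f₁ f₂) (M₁ × M₂) := modProd C₁ C₂ C₀ f₁ f₂ M₁ M₂
    (Submodule.map (LinearMap.fst ↥(fibRing C₁ C₂ C₀ f₁ f₂) M₁ M₂)
        (fibD C₁ C₂ C₀ f₁ f₂ M₁ M₂ φ hφ) = ⊤) ∧
    ((fibD C₁ C₂ C₀ f₁ f₂ M₁ M₂ φ hφ) ⊓
        LinearMap.ker (LinearMap.fst ↥(fibRing C₁ C₂ C₀ f₁ f₂) M₁ M₂) =
      RingHom.ker (fibFst C₁ C₂ C₀ f₁ f₂) • (fibD C₁ C₂ C₀ f₁ f₂ M₁ M₂ φ hφ)) ∧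
    (Submodule.map (LinearMap.snd ↥(fibRing C₁ C₂ C₀ f₁ f₂) M₁ M₂)
        (fibD C₁ C₂ C₀ f₁ f₂ M₁ M₂ φ hφ) = ⊤) ∧
    ((fibD C₁ C₂ C₀ f₁ f₂ M₁ M₂ φ hφ) ⊓
        LinearMap.ker (LinearMap.snd ↥(fibRing C₁ C₂ C₀ f₁ f₂) M₁ M₂) =
      RingHom.ker (fibSnd C₁ C₂ C₀ f₁ f₂) • (fibD C₁ C₂ C₀ f₁ f₂ M₁ M₂ φ hφ)) :=
  ⟨fibD.map_fst_eq_top, fibD.inf_ker_fst_eq_ker_fibFst_smul,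
    fibD.map_snd_eq_top, fibD.inf_ker_snd_eq_ker_fibSnd_smul⟩

/-- Let `C₁ → C₀ ← C₂` be ring surjections with fibered product
`C = C₁ ×_{C₀} C₂`.  Let `M₁` be a `C₁`-module and `M₂` a `C₂`-module with a clutching
isomorphism `φ : M₁/I₁'M₁ ≅ M₂/I₂'M₂` of `C₀`-modules (`C₀`-linearity is expressed by
compatibility with all pairs of scalars matching in `C₀`), and let `D(M₁, M₂) = M₁ ×_{M₀} M₂`
be the fibered product `C`-module.  Then the natural projections induce isomorphisms
`D(M₁,M₂)/(0×I₂)·D(M₁,M₂) ≅ M₁` and `D(M₁,M₂)/(I₁×0)·D(M₁,M₂) ≅ M₂`; concretely, each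
projection is surjective from `D` onto `Mᵢ`, with kernel exactly `ker(C → Cᵢ) • D`. -/
theorem stmt19 (C₁ C₂ C₀ : Type) [CommRing C₁] [CommRing C₂] [CommRing C₀]
    (f₁ : C₁ →+* C₀) (f₂ : C₂ →+* C₀)
    (h₁ : Function.Surjective f₁) (h₂ : Function.Surjective f₂)
    (M₁ M₂ : Type) [AddCommGroup M₁] [AddCommGroup M₂] [Module C₁ M₁] [Module C₂ M₂]
    (φ : quotMod₁ C₁ C₀ f₁ M₁ ≃+ quotMod₂ C₂ C₀ f₂ M₂)
    (hφ : ∀ (c₁ : C₁) (c₂ : C₂), f₁ c₁ = f₂ c₂ →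
      ∀ n : quotMod₁ C₁ C₀ f₁ M₁, φ (c₁ • n) = c₂ • φ n) :
    letI := modC₁ C₁ C₂ C₀ f₁ f₂ M₁
    letI := modC₂ C₁ C₂ C₀ f₁ f₂ M₂
    letI : Module ↥(fibRing C₁ C₂ C₀ f₁ f₂) (M₁ × M₂) := modProd C₁ C₂ C₀ f₁ f₂ M₁ M₂
    (Submodule.map (LinearMap.fst ↥(fibRing C₁ C₂ C₀ f₁ f₂) M₁ M₂)
        (fibD C₁ C₂ C₀ f₁ f₂ M₁ M₂ φ hφ) = ⊤) ∧
    ((fibD C₁ C₂ C₀ f₁ f₂ M₁ M₂ φ hφ) ⊓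
        LinearMap.ker (LinearMap.fst ↥(fibRing C₁ C₂ C₀ f₁ f₂) M₁ M₂) =
      RingHom.ker (fibFst C₁ C₂ C₀ f₁ f₂) • (fibD C₁ C₂ C₀ f₁ f₂ M₁ M₂ φ hφ)) ∧
    (Submodule.map (LinearMap.snd ↥(fibRing C₁ C₂ C₀ f₁ f₂) M₁ M₂)
        (fibD C₁ C₂ C₀ f₁ f₂ M₁ M₂ φ hφ) = ⊤) ∧
    ((fibD C₁ C₂ C₀ f₁ f₂ M₁ M₂ φ hφ) ⊓
        LinearMap.ker (LinearMap.snd ↥(fibRing C₁ C₂ C₀ f₁ f₂) M₁ M₂) =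
      RingHom.ker (fibSnd C₁ C₂ C₀ f₁ f₂) • (fibD C₁ C₂ C₀ f₁ f₂ M₁ M₂ φ hφ)) :=
  stmt19_general C₁ C₂ C₀ f₁ f₂ M₁ M₂ φ hφ
end
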